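/- arXiv:1406.3665 — 7 statements merged into one kernel-verified Lean document; each statement's English description precedes it below -/
import Mathlib

section
/- Let X_i ⊆ ℝ^{m_i} be a nonempty closed convex set, X = ∏_{j=1}^n X_j, let g_i : ℝ^{m_i} → ℝ be convex, and let f̃_i : X_i × X → ℝ be such that for every y ∈ X the function f̃_i(·,y) is continuously differentiable and strongly convex with parameter τ > 0 on X_i, and for every x_i ∈ X_i the map y ↦ ∇_{x_i} f̃_i(x_i,y) is Lipschitz continuous on X with constant L̃. Then for every y ∈ X the problem min_{x_i ∈ X_i} f̃_i(x_i,y) + g_i(x_i) has a unique minimizer x̂_i(y), and the map y ↦ x̂_i(y) is Lipschitz continuous: ‖x̂_i(y) − x̂_i(z)‖ ≤ (L̃/τ)‖y − z‖ for all y, z ∈ X. -/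
/-!
Adding the convex `g_i` to the strongly convex `f̃_i(·, y)` keeps the sum `τ`-strongly convex,
and a `τ`-strongly convex function grows at least like `τ/2 ‖u - w‖²` away from its minimizer
`w` on `X_i`. This growth makes the sum coercive (so a minimizer exists on the closed set `X_i`)
and, by strict convexity, the minimizer is unique. For two parameters `y, z`, adding the two
growth inequalities at the minimizers `w_y, w_z` gives
`τ ‖w_y - w_z‖² ≤ h(w_z) - h(w_y)` with `h = f̃_i(·, y) - f̃_i(·, z)`, and the mean value
inequality bounds the right-hand side by `L̃ ‖y - z‖ ‖w_y - w_z‖`.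
-/

open scoped RealInnerProductSpace
open Filter Topology

/-- The product space `ℝ^N = ℝ^{m_1} × … × ℝ^{m_n}` with the Euclidean norm. -/
abbrev TS (n : ℕ) (m : Fin n → ℕ) := PiLp 2 fun j => EuclideanSpace ℝ (Fin (m j))

section StrongConvexity

variable {E : Type*} [NormedAddCommGroup E] [InnerProductSpace ℝ E] {S : Set E} {τ : ℝ}
  {f : E → ℝ}

lemma strongConvexOn_of_le_inner (hS : Convex ℝ S) (G : E → E)
    (hf : ∀ u ∈ S, ∀ u' ∈ S, f u' + ⟪G u', u - u'⟫ + τ / 2 * ‖u - u'‖ ^ 2 ≤ f u) :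
    StrongConvexOn S τ f := by
  refine ⟨hS, fun x hx y hy a b ha hb hab => ?_⟩
  obtain rfl : a = 1 - b := eq_sub_of_add_eq hab
  set p := (1 - b) • x + b • y
  have hp : p ∈ S := hS hx hy ha hb hab
  have hxp : x - p = b • (x - y) := by simp only [p]; module
  have hyp : y - p = (b - 1) • (x - y) := by simp only [p]; module
  have h₁ := hf x hx p hp
  have h₂ := hf y hy p hp
  rw [hxp, inner_smul_right, norm_smul, mul_pow, Real.norm_eq_abs, sq_abs] at h₁
  rw [hyp, inner_smul_right, norm_smul, mul_pow, Real.norm_eq_abs, sq_abs] at h₂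
  simp only [smul_eq_mul]
  nlinarith [mul_le_mul_of_nonneg_left h₁ ha, mul_le_mul_of_nonneg_left h₂ hb]

lemma StrongConvexOn.add_convexOn {g : E → ℝ} (hf : StrongConvexOn S τ f)
    (hg : ConvexOn ℝ S g) : StrongConvexOn S τ (f + g) := by
  simpa [StrongConvexOn] using hf.add hg.uniformConvexOn_zero

lemma StrongConvexOn.add_sq_le_of_isMinOn {w u : E} (hf : StrongConvexOn S τ f) (hw : w ∈ S)
    (hmin : IsMinOn f S w) (hu : u ∈ S) : f w + τ / 2 * ‖u - w‖ ^ 2 ≤ f u := by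
  have hseg : ∀ t ∈ Set.Ioc (0 : ℝ) 1, f w + (1 - t) * (τ / 2 * ‖u - w‖ ^ 2) ≤ f u := by
    rintro t ⟨ht₀, ht₁⟩
    have hconv := hf.2 hw hu (sub_nonneg.2 ht₁) ht₀.le (sub_add_cancel 1 t)
    have hle : f w ≤ f ((1 - t) • w + t • u) :=
      hmin (hf.1 hw hu (sub_nonneg.2 ht₁) ht₀.le (sub_add_cancel 1 t))
    rw [smul_eq_mul, smul_eq_mul, norm_sub_rev] at hconv
    nlinarith
  have hlim : Tendsto (fun t : ℝ => f w + (1 - t) * (τ / 2 * ‖u - w‖ ^ 2)) (𝓝[>] 0)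
      (𝓝 (f w + (1 - 0) * (τ / 2 * ‖u - w‖ ^ 2))) :=
    (Continuous.tendsto (by fun_prop) 0).mono_left nhdsWithin_le_nhds
  simpa using le_of_tendsto hlim (eventually_of_mem (Ioc_mem_nhdsGT one_pos) hseg)

/-- Strong convexity applied at the point of the segment `[x₀, u]` at distance `1` from `x₀`. -/
lemma StrongConvexOn.le_of_one_le_norm_sub {x₀ u : E} {μ : ℝ} (hf : StrongConvexOn S τ f)
    (hx₀ : x₀ ∈ S) (hu : u ∈ S) (hμ : ∀ p ∈ S, ‖p - x₀‖ ≤ 1 → μ ≤ f p)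
    (hd : 1 ≤ ‖u - x₀‖) :
    f x₀ + ‖u - x₀‖ * (μ - f x₀ + τ / 2 * (‖u - x₀‖ - 1)) ≤ f u := by
  set d := ‖u - x₀‖
  have hd₀ : 0 < d := one_pos.trans_le hd
  set t := d⁻¹
  have ht₀ : 0 ≤ t := inv_nonneg.2 hd₀.le
  have ht₁ : 0 ≤ 1 - t := sub_nonneg.2 (inv_le_one_of_one_le₀ hd)
  have htd : t * d = 1 := inv_mul_cancel₀ hd₀.ne'
  have hp : ‖((1 - t) • x₀ + t • u) - x₀‖ = 1 := by
    rw [show ((1 - t) • x₀ + t • u) - x₀ = t • (u - x₀) by module, norm_smul,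
      Real.norm_of_nonneg ht₀, htd]
  have hμp := hμ _ (hf.1 hx₀ hu ht₁ ht₀ (sub_add_cancel 1 t)) hp.le
  have hconv := hf.2 hx₀ hu ht₁ ht₀ (sub_add_cancel 1 t)
  rw [smul_eq_mul, smul_eq_mul, norm_sub_rev] at hconv
  have key : d * μ ≤ (d - 1) * f x₀ + f u - (d - 1) * (τ / 2 * d) := by
    have := mul_le_mul_of_nonneg_left (hμp.trans hconv) hd₀.le
    have e : d * ((1 - t) * f x₀ + t * f u - (1 - t) * t * (τ / 2 * d ^ 2))
        = (d - 1) * f x₀ + f u - (d - 1) * (τ / 2 * d) := by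
      linear_combination (f u - f x₀ - τ / 2 * (d ^ 2 - d * (t * d + 1))) * htd
    linarith
  nlinarith

lemma StrongConvexOn.exists_isMinOn [ProperSpace E] (hf : StrongConvexOn S τ f) (hτ : 0 < τ)
    (hS : IsClosed S) (hne : S.Nonempty) (hc : ContinuousOn f S) : ∃ w ∈ S, IsMinOn f S w := by
  obtain ⟨x₀, hx₀⟩ := hne
  obtain ⟨w₁, ⟨hw₁, -⟩, hw₁min⟩ := ((isCompact_closedBall x₀ 1).inter_left hS).exists_isMinOn
    ⟨x₀, hx₀, Metric.mem_closedBall_self zero_le_one⟩ (hc.mono Set.inter_subset_left)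
  have hμ : ∀ p ∈ S, ‖p - x₀‖ ≤ 1 → f w₁ ≤ f p := fun p hp hp₁ =>
    hw₁min ⟨hp, by rwa [Metric.mem_closedBall, dist_eq_norm]⟩
  have hμ₀ : f w₁ ≤ f x₀ := hμ x₀ hx₀ (by simp)
  set R := 1 + 2 * (f x₀ - f w₁) / τ
  have hR : 1 ≤ R := le_add_of_nonneg_right (by positivity)
  refine hc.exists_isMinOn' hS hx₀ ?_
  filter_upwards [inf_le_left (b := 𝓟 S) (isCompact_closedBall x₀ R).compl_mem_cocompact,
    inf_le_right (a := cocompact E) (mem_principal_self S)] with u hfar hu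
  rw [Set.mem_compl_iff, Metric.mem_closedBall, dist_eq_norm, not_le] at hfar
  have hgrowth := hf.le_of_one_le_norm_sub hx₀ hu hμ (hR.trans hfar.le)
  have hbracket : 0 ≤ f w₁ - f x₀ + τ / 2 * (‖u - x₀‖ - 1) := by
    have : 2 * (f x₀ - f w₁) / τ * τ = 2 * (f x₀ - f w₁) := div_mul_cancel₀ _ hτ.ne'
    nlinarith
  nlinarith [mul_nonneg (norm_nonneg (u - x₀)) hbracket]

lemma StrongConvexOn.norm_sub_le_of_isMinOn {f₁ f₂ : E → ℝ} {w₁ w₂ : E} {C : ℝ}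
    (hf₁ : StrongConvexOn S τ f₁) (hf₂ : StrongConvexOn S τ f₂) (hτ : 0 < τ) (hC : 0 ≤ C)
    (hw₁ : w₁ ∈ S) (hw₂ : w₂ ∈ S) (h₁ : IsMinOn f₁ S w₁) (h₂ : IsMinOn f₂ S w₂)
    (hdiff : (f₁ w₂ - f₂ w₂) - (f₁ w₁ - f₂ w₁) ≤ C * ‖w₁ - w₂‖) :
    ‖w₁ - w₂‖ ≤ C / τ := by
  have g₁ := hf₁.add_sq_le_of_isMinOn hw₁ h₁ hw₂
  have g₂ := hf₂.add_sq_le_of_isMinOn hw₂ h₂ hw₁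
  rw [norm_sub_rev] at g₁
  have hsq : τ * ‖w₁ - w₂‖ ^ 2 ≤ C * ‖w₁ - w₂‖ := by linarith
  rw [le_div_iff₀ hτ]
  rcases (norm_nonneg (w₁ - w₂)).eq_or_lt with hd | hd
  · rw [← hd]; simpa using hC
  · nlinarith

end StrongConvexity

lemma norm_sub_sub_le_of_norm_gradient_sub_le {E : Type*} [NormedAddCommGroup E]
    [InnerProductSpace ℝ E] [CompleteSpace E] {S : Set E} {f₁ f₂ : E → ℝ} {C : ℝ}
    (hS : Convex ℝ S) (h₁ : Differentiable ℝ f₁) (h₂ : Differentiable ℝ f₂)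
    (hC : ∀ x ∈ S, ‖gradient f₁ x - gradient f₂ x‖ ≤ C) {a b : E} (ha : a ∈ S) (hb : b ∈ S) :
    ‖(f₁ b - f₂ b) - (f₁ a - f₂ a)‖ ≤ C * ‖b - a‖ := by
  refine hS.norm_image_sub_le_of_norm_fderiv_le (f := f₁ - f₂)
    (fun x _ => (h₁ x).sub (h₂ x)) (fun x hx => ?_) ha hb
  rw [fderiv_sub (h₁ x) (h₂ x), ← (InnerProductSpace.toDual ℝ E).symm.norm_map, map_sub]
  exact hC x hx

/-- For each `y ∈ X`, the subproblem
`min_{x_i ∈ X_i} f̃_i(x_i, y) + g_i(x_i)` has a unique minimizer `x̂_i(y)`, and the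
map `y ↦ x̂_i(y)` is Lipschitz with constant `L̃ / τ`. -/
theorem stmt0
    {n : ℕ} {m : Fin n → ℕ} (i : Fin n)
    (X : ∀ j, Set (EuclideanSpace ℝ (Fin (m j))))
    (hXne : ∀ j, (X j).Nonempty) (hXcl : ∀ j, IsClosed (X j)) (hXcv : ∀ j, Convex ℝ (X j))
    (g : EuclideanSpace ℝ (Fin (m i)) → ℝ) (hg : ConvexOn ℝ Set.univ g)
    (ft : EuclideanSpace ℝ (Fin (m i)) → TS n m → ℝ)
    (τ Lt : ℝ) (hτ : 0 < τ)
    -- `f̃_i(·, y)` is continuously differentiable for every `y ∈ X`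
    (hC1 : ∀ y : TS n m, (∀ j, y j ∈ X j) → ContDiff ℝ 1 fun u => ft u y)
    -- `f̃_i(·, y)` is strongly convex with parameter `τ` on `X_i`, uniformly in `y ∈ X`
    (hsc : ∀ y : TS n m, (∀ j, y j ∈ X j) → ∀ u ∈ X i, ∀ u' ∈ X i,
      ft u y ≥ ft u' y + ⟪gradient (fun v => ft v y) u', u - u'⟫ + τ / 2 * ‖u - u'‖ ^ 2)
    -- `y ↦ ∇_{x_i} f̃_i(x_i, y)` is Lipschitz on `X` with constant `L̃`, for every `x_i ∈ X_i`
    (hLip : ∀ xi ∈ X i, ∀ y z : TS n m, (∀ j, y j ∈ X j) → (∀ j, z j ∈ X j) →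
      ‖gradient (fun v => ft v y) xi - gradient (fun v => ft v z) xi‖ ≤ Lt * ‖y - z‖) :
    -- existence and uniqueness of the minimizer
    (∀ y : TS n m, (∀ j, y j ∈ X j) →
      ∃! w, w ∈ X i ∧ IsMinOn (fun u => ft u y + g u) (X i) w) ∧
    -- Lipschitz continuity of the best-response map
    (∀ y z : TS n m, (∀ j, y j ∈ X j) → (∀ j, z j ∈ X j) →
      ∀ wy wz, wy ∈ X i → wz ∈ X i →
        IsMinOn (fun u => ft u y + g u) (X i) wy →
        IsMinOn (fun u => ft u z + g u) (X i) wz →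
        ‖wy - wz‖ ≤ Lt / τ * ‖y - z‖) := by
  have hF : ∀ y : TS n m, (∀ j, y j ∈ X j) → StrongConvexOn (X i) τ fun u => ft u y + g u :=
    fun y hy => (strongConvexOn_of_le_inner (f := fun u => ft u y) (hXcv i) _
      (hsc y hy)).add_convexOn (hg.subset (Set.subset_univ _) (hXcv i))
  have hgc : Continuous g := continuousOn_univ.mp (hg.continuousOn isOpen_univ)
  refine ⟨fun y hy => ?_, fun y z hy hz wy wz hwy hwz hminy hminz => ?_⟩
  · obtain ⟨w, hw, hmin⟩ := (hF y hy).exists_isMinOn hτ (hXcl i) (hXne i)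
      ((hC1 y hy).continuous.add hgc).continuousOn
    exact ⟨w, ⟨hw, hmin⟩, fun w' ⟨hw', hmin'⟩ =>
      ((hF y hy).strictConvexOn hτ).eq_of_isMinOn hmin' hmin hw' hw⟩
  · have hC : 0 ≤ Lt * ‖y - z‖ := (norm_nonneg _).trans (hLip wy hwy y z hy hz)
    have hmvt := norm_sub_sub_le_of_norm_gradient_sub_le (hXcv i)
      ((hC1 y hy).differentiable one_ne_zero) ((hC1 z hz).differentiable one_ne_zero)
      (fun x hx => hLip x hx y z hy hz) hwy hwz
    rw [div_mul_eq_mul_div]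
    refine (hF y hy).norm_sub_le_of_isMinOn (hF z hz) hτ hC hwy hwz hminy hminz ?_
    rw [norm_sub_rev wy wz]
    calc _ = (ft wz y - ft wz z) - (ft wy y - ft wy z) := by ring
      _ ≤ _ := (le_abs_self _).trans hmvt
end

section
/- Let X_i ⊆ ℝ^{m_i} be nonempty closed convex, X = ∏_{j=1}^n X_j, let f : ℝ^N → ℝ be continuously differentiable with ∇f Lipschitz continuous with constant L_{∇f}, let g_i : ℝ^{m_i} → ℝ be convex, and set h(x) = f(x) + Σ_{i=1}^n g_i(x_i). Let f̃_i : X_i × X → ℝ satisfy: f̃_i(·,x) is continuously differentiable and τ-strongly convex on X_i, and ∇_{x_i} f̃_i(x_i, x) = ∇_{x_i} f(x) for all x ∈ X (gradient consistency). Fix x ∈ X, a subset S ⊆ {1,…,n}, a step-size γ ∈ (0,1], and let x̂_i = argmin_{u ∈ X_i} f̃_i(u,x) + g_i(u) for i ∈ S. Define x′ by x′_i = x_i + γ(x̂_i − x_i) for i ∈ S and x′_i = x_i for i ∉ S. Then x′ ∈ X and h(x′) ≤ h(x) + (γ(γ L_{∇f} − τ)/2) Σ_{i∈S} ‖x̂_i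 − x_i‖². -/
/-!
Comparing `f̃_i(·, x) + g_i` at its minimiser `x̂_i` and at `x_i`, strong convexity and
gradient consistency give `⟪∇_i f(x), x̂_i - x_i⟫ + g_i(x̂_i) - g_i(x_i) ≤ -τ/2 ‖x̂_i - x_i‖²`.
Along the step `x' - x = γ (x̂ - x)` (supported on `S`), the descent lemma bounds `f(x')` by
`f(x) + γ Σ_S ⟪∇_i f(x), x̂_i - x_i⟫ + L γ²/2 Σ_S ‖x̂_i - x_i‖²`, and convexity bounds
`g_i(x'_i)` by `g_i(x_i) + γ (g_i(x̂_i) - g_i(x_i))`; summing, the first-order terms are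
controlled by the first inequality.
-/

open scoped RealInnerProductSpace
open Finset

noncomputable section

section DescentLemma

variable {F : Type*} [NormedAddCommGroup F] [InnerProductSpace ℝ F] [CompleteSpace F]

theorem hasDerivAt_comp_add_smul_of_differentiable {f : F → ℝ} (hf : Differentiable ℝ f)
    (a v : F) (t : ℝ) :
    HasDerivAt (fun t : ℝ => f (a + t • v)) ⟪gradient f (a + t • v), v⟫ t := by
  have hline : HasDerivAt (fun t : ℝ => a + t • v) v t := by
    simpa using ((hasDerivAt_id t).smul_const v).const_add a
  simpa [InnerProductSpace.toDual_apply_apply, Function.comp_def] using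
    (hf (a + t • v)).hasGradientAt.hasFDerivAt.comp_hasDerivAt t hline

theorem le_add_inner_gradient_add_sq_of_lipschitz_gradient {f : F → ℝ} (hf : Differentiable ℝ f)
    {L : ℝ} (hL : ∀ a b, ‖gradient f a - gradient f b‖ ≤ L * ‖a - b‖) (a b : F) :
    f b ≤ f a + ⟪gradient f a, b - a⟫ + L / 2 * ‖b - a‖ ^ 2 := by
  set v := b - a
  set c := ⟪gradient f a, v⟫
  have hbound : ∀ t : ℝ, HasDerivAt (fun t : ℝ => f a + t * c + L / 2 * ‖v‖ ^ 2 * t ^ 2)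
      (c + L * ‖v‖ ^ 2 * t) t := fun t => by
    refine ((((hasDerivAt_id t).mul_const c).const_add (f a)).add
      ((hasDerivAt_pow 2 t).const_mul (L / 2 * ‖v‖ ^ 2))).congr_deriv ?_
    simp only [one_mul, Nat.cast_ofNat, Nat.add_one_sub_one, pow_one]; ring
  have hderiv_le : ∀ t ∈ Set.Ico (0 : ℝ) 1, ⟪gradient f (a + t • v), v⟫ ≤ c + L * ‖v‖ ^ 2 * t :=
    fun t ht => calc
      ⟪gradient f (a + t • v), v⟫ = c + ⟪gradient f (a + t • v) - gradient f a, v⟫ := by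
        rw [inner_sub_left]; ring
      _ ≤ c + ‖gradient f (a + t • v) - gradient f a‖ * ‖v‖ := by
        gcongr; exact real_inner_le_norm _ _
      _ ≤ c + L * ‖(a + t • v) - a‖ * ‖v‖ := by gcongr; exact hL _ _
      _ = c + L * ‖v‖ ^ 2 * t := by
        rw [add_sub_cancel_left, norm_smul, Real.norm_of_nonneg ht.1]; ring
  have hline := hasDerivAt_comp_add_smul_of_differentiable hf a v
  have hcomp := image_le_of_deriv_right_le_deriv_boundary
    (fun t _ => (hline t).continuousAt.continuousWithinAt) (fun t _ => (hline t).hasDerivWithinAt)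
    (by simp) (fun t _ => (hbound t).continuousAt.continuousWithinAt)
    (fun t _ => (hbound t).hasDerivWithinAt) hderiv_le (Set.right_mem_Icc.mpr zero_le_one)
  simpa [v] using hcomp

end DescentLemma

section Blocks

variable {ι : Type*} [Fintype ι] {E : ι → Type*}

theorem ConvexOn.map_add_smul_sub_le {V : Type*} [AddCommGroup V] [Module ℝ V] {φ : V → ℝ}
    (hφ : ConvexOn ℝ Set.univ φ) (x y : V) {t : ℝ} (ht : t ∈ Set.Icc (0 : ℝ) 1) :
    φ (x + t • (y - x)) ≤ φ x + t * (φ y - φ x) := by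
  have h := hφ.2 (Set.mem_univ x) (Set.mem_univ y) (sub_nonneg.mpr ht.2) ht.1 (sub_add_cancel 1 t)
  rw [show x + t • (y - x) = (1 - t) • x + t • y by module]
  simp only [smul_eq_mul] at h
  linarith

theorem sum_map_blockUpdate_le [DecidableEq ι] [∀ i, AddCommGroup (E i)] [∀ i, Module ℝ (E i)]
    {g : ∀ i, E i → ℝ} (hg : ∀ i, ConvexOn ℝ Set.univ (g i)) (S : Finset ι) {γ : ℝ}
    (hγ : γ ∈ Set.Icc (0 : ℝ) 1) (x x' y : ∀ i, E i)
    (hx' : ∀ j, x' j = if j ∈ S then x j + γ • (y j - x j) else x j) :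
    ∑ i, g i (x' i) ≤ ∑ i, g i (x i) + γ * ∑ i ∈ S, (g i (y i) - g i (x i)) := by
  calc ∑ i, g i (x' i)
      ≤ ∑ i, (g i (x i) + if i ∈ S then γ * (g i (y i) - g i (x i)) else 0) := by
        refine sum_le_sum fun i _ => ?_
        rw [hx' i]
        split_ifs
        · exact (hg i).map_add_smul_sub_le _ _ hγ
        · simp
    _ = ∑ i, g i (x i) + γ * ∑ i ∈ S, (g i (y i) - g i (x i)) := by
        rw [sum_add_distrib, sum_ite_mem, univ_inter, mul_sum]

theorem norm_sq_eq_sum_of_eq_zero_off [∀ i, NormedAddCommGroup (E i)] {S : Finset ι}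
    (v : PiLp 2 E) (hv : ∀ j ∉ S, v j = 0) :
    ‖v‖ ^ 2 = ∑ j ∈ S, ‖v j‖ ^ 2 := by
  rw [PiLp.norm_sq_eq_of_L2]
  exact (sum_subset (subset_univ S) fun j _ hj => by simp [hv j hj]).symm

variable [∀ i, NormedAddCommGroup (E i)] [∀ i, InnerProductSpace ℝ (E i)]

theorem inner_eq_sum_of_eq_zero_off {S : Finset ι} (u v : PiLp 2 E) (hv : ∀ j ∉ S, v j = 0) :
    ⟪u, v⟫ = ∑ j ∈ S, ⟪u j, v j⟫ := by
  rw [PiLp.inner_apply]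
  exact (sum_subset (subset_univ S) fun j _ hj => by simp [hv j hj]).symm

theorem le_of_lipschitz_gradient_of_blockUpdate [DecidableEq ι] [∀ i, CompleteSpace (E i)]
    {f : PiLp 2 E → ℝ} (hf : Differentiable ℝ f) {L : ℝ}
    (hL : ∀ a b, ‖gradient f a - gradient f b‖ ≤ L * ‖a - b‖) (S : Finset ι) (γ : ℝ)
    (x x' : PiLp 2 E) (d : ∀ i, E i) (hx' : ∀ j, x' j = if j ∈ S then x j + γ • d j else x j) :
    f x' ≤ f x + γ * ∑ i ∈ S, ⟪gradient f x i, d i⟫ + L / 2 * (γ ^ 2 * ∑ i ∈ S, ‖d i‖ ^ 2) := by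
  have hstep : ∀ j, (x' - x) j = if j ∈ S then γ • d j else 0 := fun j => by
    rw [PiLp.sub_apply, hx' j]; split_ifs <;> simp
  have hoff : ∀ j ∉ S, (x' - x) j = 0 := fun j hj => by rw [hstep, if_neg hj]
  have hinner : ⟪gradient f x, x' - x⟫ = γ * ∑ i ∈ S, ⟪gradient f x i, d i⟫ := by
    rw [inner_eq_sum_of_eq_zero_off _ _ hoff, mul_sum]
    exact sum_congr rfl fun j hj => by rw [hstep, if_pos hj, real_inner_smul_right]
  have hnorm : ‖x' - x‖ ^ 2 = γ ^ 2 * ∑ i ∈ S, ‖d i‖ ^ 2 := by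
    rw [norm_sq_eq_sum_of_eq_zero_off _ hoff, mul_sum]
    exact sum_congr rfl fun j hj => by
      rw [hstep, if_pos hj, norm_smul, mul_pow, Real.norm_eq_abs, sq_abs]
  simpa only [hinner, hnorm] using le_add_inner_gradient_add_sq_of_lipschitz_gradient hf hL x x'

end Blocks

theorem inner_gradient_add_sub_le_of_isMinOn {F : Type*} [NormedAddCommGroup F]
    [InnerProductSpace ℝ F] [CompleteSpace F] {φ ψ : F → ℝ} {K : Set F} {τ : ℝ} {u û : F}
    (hu : u ∈ K) (hmin : IsMinOn (fun v => φ v + ψ v) K û)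
    (hsc : φ û ≥ φ u + ⟪gradient φ u, û - u⟫ + τ / 2 * ‖û - u‖ ^ 2) :
    ⟪gradient φ u, û - u⟫ + (ψ û - ψ u) ≤ -(τ / 2) * ‖û - u‖ ^ 2 := by
  have := isMinOn_iff.mp hmin u hu
  linarith

theorem stmt3_general
    {n : ℕ} {m : Fin n → ℕ}
    (X : ∀ j, Set (EuclideanSpace ℝ (Fin (m j))))
    (hXcv : ∀ j, Convex ℝ (X j))
    (f : TS n m → ℝ) (hf : ContDiff ℝ 1 f)
    (Lf : ℝ)
    -- `∇f` is Lipschitz continuous with constant `L_{∇f}`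
    (hfL : ∀ a b : TS n m, ‖gradient f a - gradient f b‖ ≤ Lf * ‖a - b‖)
    (g : ∀ j, EuclideanSpace ℝ (Fin (m j)) → ℝ) (hg : ∀ j, ConvexOn ℝ Set.univ (g j))
    (ft : ∀ j, EuclideanSpace ℝ (Fin (m j)) → TS n m → ℝ)
    (τ : ℝ)
    (hsc : ∀ i, ∀ y : TS n m, (∀ j, y j ∈ X j) → ∀ u ∈ X i, ∀ u' ∈ X i,
      ft i u y ≥ ft i u' y + ⟪gradient (fun v => ft i v y) u', u - u'⟫ + τ / 2 * ‖u - u'‖ ^ 2)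
    -- gradient consistency: `∇_{x_i} f̃_i(x_i, x) = ∇_{x_i} f(x)` for all `x ∈ X`
    (hgc : ∀ i, ∀ x : TS n m, (∀ j, x j ∈ X j) →
      gradient (fun u => ft i u x) (x i) = gradient f x i)
    -- the current point, block set, step-size and best responses
    (x : TS n m) (hx : ∀ j, x j ∈ X j)
    (S : Finset (Fin n)) (γ : ℝ) (hγ0 : 0 < γ) (hγ1 : γ ≤ 1)
    (xhat : ∀ j, EuclideanSpace ℝ (Fin (m j)))
    (hxhat : ∀ i ∈ S, xhat i ∈ X i ∧ IsMinOn (fun u => ft i u x + g i u) (X i) (xhat i))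
    (x' : TS n m)
    (hx' : ∀ j, x' j = if j ∈ S then x j + γ • (xhat j - x j) else x j) :
    (∀ j, x' j ∈ X j) ∧
    f x' + ∑ i, g i (x' i) ≤
      f x + ∑ i, g i (x i) + γ * (γ * Lf - τ) / 2 * ∑ i ∈ S, ‖xhat i - x i‖ ^ 2 := by
  have hγ : γ ∈ Set.Icc (0 : ℝ) 1 := ⟨hγ0.le, hγ1⟩
  refine ⟨fun j => ?_, ?_⟩
  · rw [hx' j]
    split_ifs with hj
    exacts [(hXcv j).add_smul_sub_mem (hx j) (hxhat j hj).1 hγ, hx j]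
  have hf_le := le_of_lipschitz_gradient_of_blockUpdate (hf.differentiable one_ne_zero) hfL S γ
    x x' (fun j => xhat j - x j) hx'
  have hg_le := sum_map_blockUpdate_le hg S hγ x x' xhat hx'
  have hbest : ∑ i ∈ S, (⟪gradient f x i, xhat i - x i⟫ + (g i (xhat i) - g i (x i))) ≤
      ∑ i ∈ S, -(τ / 2) * ‖xhat i - x i‖ ^ 2 := sum_le_sum fun i hi => by
    rw [← hgc i x hx]
    exact inner_gradient_add_sub_le_of_isMinOn (hx i) (hxhat i hi).2
      (hsc i x hx _ (hxhat i hi).1 _ (hx i))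
  rw [sum_add_distrib, ← mul_sum] at hbest
  linarith [mul_le_mul_of_nonneg_left hbest hγ0.le]

/-- **one-step sufficient decrease.** If `x'_i = x_i + γ(x̂_i − x_i)` for
`i ∈ S` and `x'_i = x_i` otherwise, then `x' ∈ X` and
`h(x') ≤ h(x) + (γ(γ L_{∇f} − τ)/2) Σ_{i ∈ S} ‖x̂_i − x_i‖²`, where
`h(x) = f(x) + Σ_i g_i(x_i)`. -/
theorem stmt3
    {n : ℕ} {m : Fin n → ℕ}
    (X : ∀ j, Set (EuclideanSpace ℝ (Fin (m j))))
    (hXne : ∀ j, (X j).Nonempty) (hXcl : ∀ j, IsClosed (X j)) (hXcv : ∀ j, Convex ℝ (X j))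
    (f : TS n m → ℝ) (hf : ContDiff ℝ 1 f)
    (Lf : ℝ)
    -- `∇f` is Lipschitz continuous with constant `L_{∇f}`
    (hfL : ∀ a b : TS n m, ‖gradient f a - gradient f b‖ ≤ Lf * ‖a - b‖)
    (g : ∀ j, EuclideanSpace ℝ (Fin (m j)) → ℝ) (hg : ∀ j, ConvexOn ℝ Set.univ (g j))
    (ft : ∀ j, EuclideanSpace ℝ (Fin (m j)) → TS n m → ℝ)
    (τ : ℝ) (hτ : 0 < τ)
    -- `f̃_i(·, y)` is continuously differentiable and `τ`-strongly convex on `X_i`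
    (hC1 : ∀ i, ∀ y : TS n m, (∀ j, y j ∈ X j) → ContDiff ℝ 1 fun u => ft i u y)
    (hsc : ∀ i, ∀ y : TS n m, (∀ j, y j ∈ X j) → ∀ u ∈ X i, ∀ u' ∈ X i,
      ft i u y ≥ ft i u' y + ⟪gradient (fun v => ft i v y) u', u - u'⟫ + τ / 2 * ‖u - u'‖ ^ 2)
    -- gradient consistency: `∇_{x_i} f̃_i(x_i, x) = ∇_{x_i} f(x)` for all `x ∈ X`
    (hgc : ∀ i, ∀ x : TS n m, (∀ j, x j ∈ X j) →
      gradient (fun u => ft i u x) (x i) = gradient f x i)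
    -- the current point, block set, step-size and best responses
    (x : TS n m) (hx : ∀ j, x j ∈ X j)
    (S : Finset (Fin n)) (γ : ℝ) (hγ0 : 0 < γ) (hγ1 : γ ≤ 1)
    (xhat : ∀ j, EuclideanSpace ℝ (Fin (m j)))
    (hxhat : ∀ i ∈ S, xhat i ∈ X i ∧ IsMinOn (fun u => ft i u x + g i u) (X i) (xhat i))
    (x' : TS n m)
    (hx' : ∀ j, x' j = if j ∈ S then x j + γ • (xhat j - x j) else x j) :
    (∀ j, x' j ∈ X j) ∧
    f x' + ∑ i, g i (x' i) ≤
      f x + ∑ i, g i (x i) + γ * (γ * Lf - τ) / 2 * ∑ i ∈ S, ‖xhat i - x i‖ ^ 2 :=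
  stmt3_general X hXcv f hf Lf hfL g hg ft τ hsc hgc x hx S γ hγ0 hγ1 xhat hxhat x' hx'
end
end

section
/- Let (Δ^r)_{r≥0} be a sequence of nonnegative reals and (γ^r)_{r≥0} a sequence in (0,1] such that Σ_{r=0}^∞ γ^r = +∞ and Σ_{r=0}^∞ γ^r (Δ^r)² < +∞. Suppose there is a constant C > 0 such that |Δ^{r+1} − Δ^r| ≤ C γ^r Δ^r for all r, and limsup_{r→∞} γ^r < 1/C. Then lim_{r→∞} Δ^r = 0. -/
/-!
If `Δ` does not tend to `0`, it exceeds `2δ` infinitely often for some `δ > 0`, while it also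
drops below `δ` infinitely often, since otherwise `Σ γ^r ≤ δ⁻² Σ γ^r (Δ^r)²` would converge.
So there are arbitrarily late upcrossings: `Δ^m < δ ≤ Δ^j` for `m < j < n` and `Δ^n ≥ 2δ`.
Along such a stretch the increments are at most `C γ^j Δ^j`; the first one contributes at most
`C γ^m δ`, which stays below `θ δ` with `θ < 1` thanks to the limsup condition, so the others
add up to more than `(1 - θ) δ`, and since `Δ^j ≥ δ` there,
`Σ_{m < j < n} γ^j (Δ^j)² ≥ (1 - θ) δ² / C`. This contradicts the convergence of
`Σ γ^r (Δ^r)²`, whose tails become arbitrarily small.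
-/

open Filter Topology Finset

lemma frequently_lt_of_not_summable {γ a : ℕ → ℝ} (hγ : ∀ r, 0 ≤ γ r) (hdiv : ¬ Summable γ)
    (hconv : Summable fun r => γ r * a r) {c : ℝ} (hc : 0 < c) :
    ∃ᶠ r in atTop, a r < c := by
  refine fun hge => hdiv <| Summable.of_norm_bounded_eventually_nat (hconv.div_const c) ?_
  filter_upwards [hge] with r hr
  rw [not_lt] at hr
  rw [Real.norm_of_nonneg (hγ r), le_div_iff₀ hc]
  exact mul_le_mul_of_nonneg_left hr (hγ r)

lemma Summable.exists_sum_Ico_lt {f : ℕ → ℝ} (hf : Summable f) {c : ℝ} (hc : 0 < c) :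
    ∃ N, ∀ m n, N ≤ m → ∑ i ∈ Ico m n, f i < c := by
  obtain ⟨s, hs⟩ := hf.vanishing (Iio_mem_nhds hc)
  refine ⟨s.sup id + 1, fun m n hm => hs _ (disjoint_left.2 fun i hi his => ?_)⟩
  have hi_le := le_sup (f := id) his
  simp only [mem_Ico, id] at hi hi_le
  omega

lemma sub_le_sum_Ico_of_succ_sub_le {u v : ℕ → ℝ} (h : ∀ r, u (r + 1) - u r ≤ v r) {m n : ℕ}
    (hmn : m ≤ n) : u n - u m ≤ ∑ i ∈ Ico m n, v i := by
  rw [← sum_Ico_sub u hmn]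
  exact sum_le_sum fun i _ => h i

lemma exists_upcrossing {u : ℕ → ℝ} {a b : ℝ} (hab : a ≤ b) (hlow : ∃ᶠ r in atTop, u r < a)
    (hhigh : ∃ᶠ r in atTop, b ≤ u r) (N : ℕ) :
    ∃ m n, N ≤ m ∧ m < n ∧ u m < a ∧ b ≤ u n ∧ ∀ j, m < j → j < n → a ≤ u j := by
  classical
  obtain ⟨p, hNp, hp⟩ := (frequently_atTop.1 hlow) N
  obtain ⟨n, hn_late, hn⟩ := (frequently_atTop.1 hhigh) (p + 1)
  have hpn : p ≤ n := by omega
  set m := Nat.findGreatest (u · < a) n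
  have hm : u m < a := Nat.findGreatest_spec (P := (u · < a)) hpn hp
  have hmn : m < n := (Nat.findGreatest_le n).lt_of_ne fun h : m = n => (h ▸ hm).not_ge (hab.trans hn)
  refine ⟨m, n, hNp.trans (Nat.le_findGreatest hpn hp), hmn, hm, hn, fun j hj hjn => ?_⟩
  exact not_lt.1 (Nat.findGreatest_is_greatest hj hjn.le)

lemma lt_sum_Ico_of_upcrossing {Δ γ : ℕ → ℝ} {C δ : ℝ} (hC : 0 < C) (hδ : 0 < δ)
    (hγ : ∀ r, 0 ≤ γ r) (hstep : ∀ r, Δ (r + 1) - Δ r ≤ C * γ r * Δ r) {m n : ℕ}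
    (hmn : m < n) (hm : Δ m < δ) (hn : 2 * δ ≤ Δ n) (hbetween : ∀ j, m < j → j < n → δ ≤ Δ j) :
    (1 - C * γ m) * δ ^ 2 / C < ∑ j ∈ Ico (m + 1) n, γ j * Δ j ^ 2 := by
  have hrise : δ < C * γ m * Δ m + ∑ j ∈ Ico (m + 1) n, C * γ j * Δ j := by
    rw [← sum_eq_sum_Ico_succ_bot hmn (fun j => C * γ j * Δ j)]
    linarith [sub_le_sum_Ico_of_succ_sub_le hstep hmn.le]
  have hfirst : C * γ m * Δ m ≤ C * γ m * δ :=
    mul_le_mul_of_nonneg_left hm.le (mul_nonneg hC.le (hγ m))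
  have hrest : δ / C * ∑ j ∈ Ico (m + 1) n, C * γ j * Δ j ≤
      ∑ j ∈ Ico (m + 1) n, γ j * Δ j ^ 2 := by
    rw [mul_sum]
    refine sum_le_sum fun j hj => ?_
    rw [mem_Ico] at hj
    have hδj := hbetween j (by omega) hj.2
    calc δ / C * (C * γ j * Δ j) = γ j * Δ j * δ := by field_simp
      _ ≤ γ j * Δ j * Δ j := by gcongr; exact mul_nonneg (hγ j) (hδ.le.trans hδj)
      _ = γ j * Δ j ^ 2 := by ring
  calc (1 - C * γ m) * δ ^ 2 / C = δ / C * ((1 - C * γ m) * δ) := by ring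
    _ < δ / C * ∑ j ∈ Ico (m + 1) n, C * γ j * Δ j := by gcongr; linarith
    _ ≤ _ := hrest

/-- If `(Δ^r)` is nonnegative, `(γ^r) ⊆ (0,1]` with `Σ γ^r = ∞` and
`Σ γ^r (Δ^r)² < ∞`, `|Δ^{r+1} − Δ^r| ≤ C γ^r Δ^r` for some `C > 0`, and
`limsup γ^r < 1/C`, then `Δ^r → 0`. -/
theorem stmt4
    (Δ γ : ℕ → ℝ)
    (hΔ : ∀ r, 0 ≤ Δ r)
    (hγ : ∀ r, γ r ∈ Set.Ioc (0 : ℝ) 1)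
    -- `Σ_{r} γ^r = +∞`
    (hdiv : ¬ Summable γ)
    -- `Σ_{r} γ^r (Δ^r)² < +∞`
    (hconv : Summable fun r => γ r * Δ r ^ 2)
    (C : ℝ) (hC : 0 < C)
    (hstep : ∀ r, |Δ (r + 1) - Δ r| ≤ C * γ r * Δ r)
    (hlimsup : limsup γ atTop < 1 / C) :
    Tendsto Δ atTop (nhds 0) := by
  have hγ0 r : 0 ≤ γ r := (hγ r).1.le
  obtain ⟨g, hLg, hgC⟩ := exists_between hlimsup
  have hγg : ∀ᶠ r in atTop, γ r < g :=
    eventually_lt_of_limsup_lt hLg (isBoundedUnder_of ⟨1, fun r => (hγ r).2⟩)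
  have hθ : C * g < 1 := by rwa [lt_div_iff₀ hC, mul_comm] at hgC
  refine tendsto_order.2 ⟨fun a ha => .of_forall fun r => ha.trans_le (hΔ r), fun ε hε => ?_⟩
  by_contra hfar
  have hhigh : ∃ᶠ r in atTop, 2 * (ε / 2) ≤ Δ r := by
    simpa only [not_eventually, not_lt, mul_div_cancel₀ ε two_ne_zero] using hfar
  have hlow : ∃ᶠ r in atTop, Δ r < ε / 2 :=
    (frequently_lt_of_not_summable hγ0 hdiv hconv (by positivity : 0 < (ε / 2) ^ 2)).mono
      fun r hr => (pow_lt_pow_iff_left₀ (hΔ r) (by positivity) two_ne_zero).1 hr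
  obtain ⟨N₀, hN₀⟩ := eventually_atTop.1 hγg
  obtain ⟨N, hN⟩ := hconv.exists_sum_Ico_lt (c := (1 - C * g) * (ε / 2) ^ 2 / C)
    (div_pos (mul_pos (by linarith) (by positivity)) hC)
  obtain ⟨m, n, hm, hmn, hΔm, hΔn, hbetween⟩ :=
    exists_upcrossing (by linarith) hlow hhigh (max N₀ N)
  have hcost := lt_sum_Ico_of_upcrossing hC (half_pos hε) hγ0
    (fun r => (le_abs_self _).trans (hstep r)) hmn hΔm hΔn hbetween
  have hγm := hN₀ m (le_of_max_le_left hm)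
  have hcost_ge : (1 - C * g) * (ε / 2) ^ 2 / C ≤ (1 - C * γ m) * (ε / 2) ^ 2 / C := by
    gcongr
  linarith [hN (m + 1) n (by omega)]
end

section
/- Let X_i ⊆ ℝ^{m_i} be nonempty closed convex, X = ∏_{j=1}^n X_j, let f : ℝ^N → ℝ be continuously differentiable, g_i : ℝ^{m_i} → ℝ convex, and let f̃_i : X_i × X → ℝ be jointly continuous, with f̃_i(·,y) continuously differentiable and τ-strongly convex on X_i for each y ∈ X, satisfying gradient consistency ∇_{x_i} f̃_i(x_i, x) = ∇_{x_i} f(x) for all x ∈ X, and with y ↦ ∇_{x_i} f̃_i(x_i,y) Lipschitz on X with constant L̃ uniformly in x_i. Let x̂_i(y) = argmin_{u ∈ X_i} f̃_i(u,y) + g_i(u). Suppose (x^{r_j})_j is a sequence in X converging to x̄ ∈ X with lim_{j→∞} ‖x̂(x^{r_j}) − x^{r_j}‖ = 0, where x̂(y) = (x̂_1(y),…,x̂_n(y)). Then x̄ is a stationary point of the problem min_{x∈X} f(x) + Σ_i g_i(x_i). -/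
/-!
The limit point `x̄` minimises each surrogate problem `f̃_i(·, x̄) + g_i` over `X_i`, since
`x̂(x^{r_j}) → x̄` and minimality passes to the limit by joint continuity. The first-order
condition for this convex-plus-smooth problem, combined with the separation theorem, yields a
subgradient `d_i ∈ ∂g_i(x̄_i)` with `⟨∇_{x_i} f̃_i(x̄_i, x̄) + d_i, x_i − x̄_i⟩ ≥ 0` on `X_i`, and
gradient consistency turns `∇_{x_i} f̃_i(x̄_i, x̄)` into `∇_{x_i} f(x̄)`. Summing over the blocks
gives stationarity.
-/

open scoped RealInnerProductSpace
open Filter Topology Finset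

noncomputable section

theorem isMinOn_of_tendsto {α β ι : Type*} [TopologicalSpace α] [TopologicalSpace β]
    {l : Filter ι} [l.NeBot] {F : α → β → ℝ} (hF : Continuous fun p : α × β => F p.1 p.2)
    {S : Set α} {a : ι → α} {y : ι → β} {a₀ : α} {y₀ : β}
    (hmin : ∀ k, IsMinOn (fun u => F u (y k)) S (a k))
    (ha : Tendsto a l (𝓝 a₀)) (hy : Tendsto y l (𝓝 y₀)) :
    IsMinOn (fun u => F u y₀) S a₀ :=
  isMinOn_iff.mpr fun u hu =>
    le_of_tendsto_of_tendsto' ((hF.tendsto _).comp (ha.prodMk_nhds hy))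
      ((hF.tendsto _).comp (tendsto_const_nhds.prodMk_nhds hy))
      fun k => isMinOn_iff.mp (hmin k) u hu

section InnerProductSpace

variable {E : Type*} [NormedAddCommGroup E] [InnerProductSpace ℝ E] [CompleteSpace E]

theorem IsMinOn.inner_gradient_add_sub_nonneg {h g : E → ℝ} {X : Set E} {x u : E}
    (hmin : IsMinOn (fun w => h w + g w) X x) (hx : x ∈ X) (hX : Convex ℝ X)
    (hh : DifferentiableAt ℝ h x) (hg : ConvexOn ℝ X g) (hu : u ∈ X) :
    0 ≤ ⟪gradient h x, u - x⟫ + (g u - g x) := by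
  set v := u - x
  -- `g` is replaced by its chord along the segment, which is differentiable in `t`
  set F : ℝ → ℝ := fun t => h (x + t • v) + t * (g u - g x)
  have hF : HasDerivAt F (⟪gradient h x, v⟫ + (g u - g x)) 0 := by
    have hline : HasDerivAt (fun t : ℝ => x + t • v) v 0 := by
      simpa using ((hasDerivAt_id (0 : ℝ)).smul_const v).const_add x
    have hh' : HasFDerivAt h (InnerProductSpace.toDual ℝ E (gradient h x)) (x + (0 : ℝ) • v) := by
      simpa using hh.hasGradientAt.hasFDerivAt
    refine ((hh'.comp_hasDerivAt 0 hline).add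
      ((hasDerivAt_id (0 : ℝ)).mul_const (g u - g x))).congr_deriv ?_
    simp
  have hslope : ∀ t ∈ Set.Ioc (0 : ℝ) 1, 0 ≤ t⁻¹ • (F (0 + t) - F 0) := by
    rintro t ⟨ht0, ht1⟩
    have hseg : (1 - t) • x + t • u = x + t • v := by simp only [v]; module
    have hmem : x + t • v ∈ X := hseg ▸ hX hx hu (by linarith) ht0.le (by ring)
    have hchord : g (x + t • v) ≤ (1 - t) * g x + t * g u := by
      simpa [hseg] using hg.2 hx hu (by linarith : (0 : ℝ) ≤ 1 - t) ht0.le (by ring)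
    have hle := isMinOn_iff.mp hmin _ hmem
    simp only [F, zero_add, zero_smul, add_zero, zero_mul, smul_eq_mul]
    exact mul_nonneg (inv_nonneg.mpr ht0.le) (by linarith)
  exact ge_of_tendsto hF.tendsto_slope_zero_right
    (eventually_of_mem (Ioc_mem_nhdsGT one_pos) hslope)

theorem IsMinOn.exists_subgradient_inner_sub_nonneg {ψ : E → ℝ} {X : Set E} {x : E}
    (hmin : IsMinOn ψ X x) (hx : x ∈ X) (hX : Convex ℝ X) (hψ : ConvexOn ℝ Set.univ ψ)
    (hψc : Continuous ψ) :
    ∃ q : E, (∀ u, ψ x + ⟪q, u - x⟫ ≤ ψ u) ∧ ∀ u ∈ X, 0 ≤ ⟪q, u - x⟫ := by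
  have hepi_cv : Convex ℝ {p : E × ℝ | ψ p.1 < p.2} := by
    simpa using hψ.convex_strict_epigraph
  have hepi_op : IsOpen {p : E × ℝ | ψ p.1 < p.2} :=
    isOpen_lt (hψc.comp continuous_fst) continuous_snd
  have hdisj : Disjoint {p : E × ℝ | ψ p.1 < p.2} (X ×ˢ Set.Iic (ψ x)) := by
    refine Set.disjoint_left.mpr fun p hp ⟨hp1, hp2⟩ => ?_
    exact (isMinOn_iff.mp hmin _ hp1).not_gt (hp.trans_le hp2)
  -- the separating functional `φ(u, t) = ℓ u + t β` is non-vertical (`β < 0`), so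
  -- `q = ℓ / (-β)` is a subgradient of `ψ` at `x` and lies in `-N_X(x)`
  obtain ⟨φ, c, hlt, hle⟩ :=
    geometric_hahn_banach_open hepi_cv hepi_op (hX.prod (convex_Iic _)) hdisj
  set ℓ := φ.comp (ContinuousLinearMap.inl ℝ E ℝ)
  set β := φ (0, 1)
  have hφ : ∀ u t, φ (u, t) = ℓ u + t * β := fun u t => by
    have : (u, t) = (u, (0 : ℝ)) + t • ((0 : E), (1 : ℝ)) := by simp
    rw [this, map_add, map_smul, smul_eq_mul]
    rfl
  have hβ : β < 0 := by
    have h1 := hlt (x, ψ x + 1) (by simp)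
    have h2 := hle (x, ψ x) ⟨hx, Set.self_mem_Iic⟩
    rw [hφ] at h1 h2
    linarith
  have hgraph : ∀ u, ℓ u + ψ u * β ≤ c := fun u => by
    have hcont : Continuous fun t : ℝ => ℓ u + t * β := by fun_prop
    refine le_of_tendsto (hcont.continuousWithinAt (s := Set.Ioi (ψ u))) ?_
    filter_upwards [self_mem_nhdsWithin] with t ht
    exact (hφ u t ▸ hlt (u, t) ht).le
  have hc : c = ℓ x + ψ x * β :=
    le_antisymm (hφ x _ ▸ hle (x, ψ x) ⟨hx, Set.self_mem_Iic⟩) (hgraph x)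
  have hinner : ∀ u, ⟪(-β)⁻¹ • (InnerProductSpace.toDual ℝ E).symm ℓ, u - x⟫
      = (ℓ u - ℓ x) / -β := fun u => by
    rw [real_inner_smul_left, InnerProductSpace.toDual_symm_apply, map_sub, inv_mul_eq_div]
  refine ⟨(-β)⁻¹ • (InnerProductSpace.toDual ℝ E).symm ℓ, fun u => ?_, fun u hu => ?_⟩
  · rw [hinner, ← le_sub_iff_add_le', div_le_iff₀ (neg_pos.mpr hβ)]
    linarith [hgraph u]
  · have := hle (u, ψ x) ⟨hu, Set.self_mem_Iic⟩
    rw [hφ] at this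
    rw [hinner]
    exact div_nonneg (by linarith) (neg_pos.mpr hβ).le

theorem IsMinOn.exists_subgradient_stationary {h g : E → ℝ} {X : Set E} {x : E}
    (hmin : IsMinOn (fun w => h w + g w) X x) (hx : x ∈ X) (hX : Convex ℝ X)
    (hh : DifferentiableAt ℝ h x) (hg : ConvexOn ℝ Set.univ g) (hgc : Continuous g) :
    ∃ d : E, (∀ u, g x + ⟪d, u - x⟫ ≤ g u) ∧ ∀ u ∈ X, 0 ≤ ⟪gradient h x + d, u - x⟫ := by
  set a := gradient h x
  have hlin : IsMinOn (fun u => g u + ⟪a, u⟫) X x := isMinOn_iff.mpr fun u hu => by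
    have := hmin.inner_gradient_add_sub_nonneg hx hX hh (hg.subset (Set.subset_univ X) hX) hu
    rw [inner_sub_right] at this
    linarith
  obtain ⟨q, hq, hqX⟩ := hlin.exists_subgradient_inner_sub_nonneg hx hX
    (hg.add ((innerₛₗ ℝ a).convexOn convex_univ)) (hgc.add (continuous_const.inner continuous_id))
  refine ⟨q - a, fun u => ?_, fun u hu => by simpa using hqX u hu⟩
  have := hq u
  simp only [inner_sub_left, inner_sub_right] at this ⊢
  linarith

end InnerProductSpace

theorem PiLp.exists_stationary_of_blockwise {ι : Type*} [Fintype ι] {E : ι → Type*}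
    [∀ i, NormedAddCommGroup (E i)] [∀ i, InnerProductSpace ℝ (E i)]
    (X : ∀ i, Set (E i)) (g : ∀ i, E i → ℝ) (G x : PiLp 2 E)
    (h : ∀ i, ∃ d : E i,
      (∀ u, g i (x i) + ⟪d, u - x i⟫ ≤ g i u) ∧ ∀ u ∈ X i, 0 ≤ ⟪G i + d, u - x i⟫) :
    ∃ D : PiLp 2 E, (∀ u : PiLp 2 E, ∑ i, g i (x i) + ⟪D, u - x⟫ ≤ ∑ i, g i (u i)) ∧
      ∀ u : PiLp 2 E, (∀ i, u i ∈ X i) → 0 ≤ ⟪G + D, u - x⟫ := by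
  choose d hsub hvi using h
  refine ⟨WithLp.toLp 2 d, fun u => ?_, fun u hu => ?_⟩
  · rw [PiLp.inner_apply, ← sum_add_distrib]
    exact sum_le_sum fun i _ => by simpa using hsub i (u i)
  · rw [PiLp.inner_apply]
    exact sum_nonneg fun i _ => by simpa using hvi i (u i) (hu i)

theorem stmt5_general
    {n : ℕ} {m : Fin n → ℕ}
    (X : ∀ j, Set (EuclideanSpace ℝ (Fin (m j))))
    (hXcv : ∀ j, Convex ℝ (X j))
    (f : TS n m → ℝ)
    (g : ∀ j, EuclideanSpace ℝ (Fin (m j)) → ℝ) (hg : ∀ j, ConvexOn ℝ Set.univ (g j))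
    (ft : ∀ j, EuclideanSpace ℝ (Fin (m j)) → TS n m → ℝ)
    -- `f̃_i` is jointly continuous
    (hcont : ∀ i, Continuous fun p : EuclideanSpace ℝ (Fin (m i)) × TS n m => ft i p.1 p.2)
    -- `f̃_i(·, y)` is continuously differentiable and `τ`-strongly convex on `X_i`
    (hC1 : ∀ i, ∀ y : TS n m, (∀ j, y j ∈ X j) → ContDiff ℝ 1 fun u => ft i u y)
    -- gradient consistency: `∇_{x_i} f̃_i(x_i, x) = ∇_{x_i} f(x)` for all `x ∈ X`
    (hgc : ∀ i, ∀ x : TS n m, (∀ j, x j ∈ X j) →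
      gradient (fun u => ft i u x) (x i) = gradient f x i)
    -- the best-response map `x̂(y)`
    (xhat : TS n m → TS n m)
    (hxhat : ∀ y : TS n m, (∀ j, y j ∈ X j) → ∀ i,
      xhat y i ∈ X i ∧ IsMinOn (fun u => ft i u y + g i u) (X i) (xhat y i))
    -- a sequence in `X` converging to `x̄ ∈ X` with vanishing best-response residual
    (xs : ℕ → TS n m) (hxs : ∀ k j, xs k j ∈ X j)
    (xbar : TS n m) (hxbar : ∀ j, xbar j ∈ X j)
    (hlim : Tendsto xs atTop (nhds xbar))
    (hres : Tendsto (fun k => ‖xhat (xs k) - xs k‖) atTop (nhds 0)) :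
    ∃ d : TS n m,
      (∀ u : TS n m, (∑ i, g i (xbar i)) + ⟪d, u - xbar⟫ ≤ ∑ i, g i (u i)) ∧
      (∀ x : TS n m, (∀ j, x j ∈ X j) → 0 ≤ ⟪gradient f xbar + d, x - xbar⟫) := by
  have hgcont : ∀ i, Continuous (g i) := fun i =>
    continuousOn_univ.mp ((hg i).continuousOn isOpen_univ)
  have hxhat_tendsto : Tendsto (fun k => xhat (xs k)) atTop (𝓝 xbar) := by
    simpa using (tendsto_zero_iff_norm_tendsto_zero.mpr hres).add hlim
  refine PiLp.exists_stationary_of_blockwise X g (gradient f xbar) xbar fun i => ?_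
  have hmin : IsMinOn (fun u => ft i u xbar + g i u) (X i) (xbar i) :=
    isMinOn_of_tendsto (F := fun u y => ft i u y + g i u)
      ((hcont i).add ((hgcont i).comp continuous_fst)) (fun k => (hxhat (xs k) (hxs k) i).2)
      (((PiLp.continuous_apply 2 _ i).tendsto xbar).comp hxhat_tendsto) hlim
  rw [← hgc i xbar hxbar]
  exact hmin.exists_subgradient_stationary (hxbar i) (hXcv i)
    ((hC1 i xbar hxbar).differentiable one_ne_zero _) (hg i) (hgcont i)

/-- If a sequence in `X` converges to `x̄ ∈ X` and the best-response
residual `‖x̂(x^{r_j}) − x^{r_j}‖` tends to `0`, then `x̄` is a stationary point of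
`min_{x ∈ X} f(x) + Σ_i g_i(x_i)`: there exists `d ∈ ∂g(x̄)` such that
`⟨∇f(x̄) + d, x − x̄⟩ ≥ 0` for all `x ∈ X`. -/
theorem stmt5
    {n : ℕ} {m : Fin n → ℕ}
    (X : ∀ j, Set (EuclideanSpace ℝ (Fin (m j))))
    (hXne : ∀ j, (X j).Nonempty) (hXcl : ∀ j, IsClosed (X j)) (hXcv : ∀ j, Convex ℝ (X j))
    (f : TS n m → ℝ) (hf : ContDiff ℝ 1 f)
    (g : ∀ j, EuclideanSpace ℝ (Fin (m j)) → ℝ) (hg : ∀ j, ConvexOn ℝ Set.univ (g j))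
    (ft : ∀ j, EuclideanSpace ℝ (Fin (m j)) → TS n m → ℝ)
    (τ Lt : ℝ) (hτ : 0 < τ)
    -- `f̃_i` is jointly continuous
    (hcont : ∀ i, Continuous fun p : EuclideanSpace ℝ (Fin (m i)) × TS n m => ft i p.1 p.2)
    -- `f̃_i(·, y)` is continuously differentiable and `τ`-strongly convex on `X_i`
    (hC1 : ∀ i, ∀ y : TS n m, (∀ j, y j ∈ X j) → ContDiff ℝ 1 fun u => ft i u y)
    (hsc : ∀ i, ∀ y : TS n m, (∀ j, y j ∈ X j) → ∀ u ∈ X i, ∀ u' ∈ X i,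
      ft i u y ≥ ft i u' y + ⟪gradient (fun v => ft i v y) u', u - u'⟫ + τ / 2 * ‖u - u'‖ ^ 2)
    -- gradient consistency: `∇_{x_i} f̃_i(x_i, x) = ∇_{x_i} f(x)` for all `x ∈ X`
    (hgc : ∀ i, ∀ x : TS n m, (∀ j, x j ∈ X j) →
      gradient (fun u => ft i u x) (x i) = gradient f x i)
    -- `y ↦ ∇_{x_i} f̃_i(x_i, y)` is Lipschitz on `X` with constant `L̃`, uniformly in `x_i`
    (hLip : ∀ i, ∀ xi ∈ X i, ∀ y z : TS n m, (∀ j, y j ∈ X j) → (∀ j, z j ∈ X j) →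
      ‖gradient (fun v => ft i v y) xi - gradient (fun v => ft i v z) xi‖ ≤ Lt * ‖y - z‖)
    -- the best-response map `x̂(y)`
    (xhat : TS n m → TS n m)
    (hxhat : ∀ y : TS n m, (∀ j, y j ∈ X j) → ∀ i,
      xhat y i ∈ X i ∧ IsMinOn (fun u => ft i u y + g i u) (X i) (xhat y i))
    -- a sequence in `X` converging to `x̄ ∈ X` with vanishing best-response residual
    (xs : ℕ → TS n m) (hxs : ∀ k j, xs k j ∈ X j)
    (xbar : TS n m) (hxbar : ∀ j, xbar j ∈ X j)
    (hlim : Tendsto xs atTop (nhds xbar))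
    (hres : Tendsto (fun k => ‖xhat (xs k) - xs k‖) atTop (nhds 0)) :
    ∃ d : TS n m,
      (∀ u : TS n m, (∑ i, g i (xbar i)) + ⟪d, u - xbar⟫ ≤ ∑ i, g i (u i)) ∧
      (∀ x : TS n m, (∀ j, x j ∈ X j) → 0 ≤ ⟪gradient f xbar + d, x - xbar⟫) :=
  stmt5_general X hXcv f g hg ft hcont hC1 hgc xhat hxhat xs hxs xbar hxbar hlim hres
end
end

section
/- (One-step randomized sufficient descent.) Let X_i ⊆ ℝ^{m_i} be nonempty closed convex, X = ∏_{j=1}^n X_j, f : ℝ^N → ℝ continuously differentiable with ∇f Lipschitz with constant L_{∇f}, g_i : ℝ^{m_i} → ℝ convex, h = f + Σ_i g_i, and let f̃_i satisfy τ-strong convexity in the first argument and gradient consistency ∇_{x_i} f̃_i(x_i,x) = ∇_{x_i} f(x). Fix x ∈ X, a step-size γ with 0 < γ < τ/L_{∇f} and γ ≤ 1, and let x̂_i = argmin_{u∈X_i} f̃_i(u,x) + g_i(u) for all i. Let S be a random subset of {1,…,n} on a probability space with P(i ∈ S) ≥ p_min > 0 for every i, and define the random point X′ by X′_i = x_i +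 γ(x̂_i − x_i) if i ∈ S and X′_i = x_i otherwise. Then E[h(X′)] ≤ h(x) − (γ(τ − γ L_{∇f})/2) · p_min · ‖x̂ − x‖², where x̂ = (x̂_1,…,x̂_n). -/
/-!
Updating the blocks in `S` by the step `γ (x̂ − x)` gives a deterministic descent for every
realisation of `S`. The descent lemma for the `L`-smooth part `f` bounds `f(x')` by its
linearisation at `x` plus `L γ² ‖(x̂ − x)_S‖² / 2`, convexity bounds each `g_i(x'_i)` by
`g_i(x_i) + γ (g_i(x̂_i) − g_i(x_i))`, and comparing the best response `x̂_i` with `x_i`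
in the `τ`-strongly convex surrogate (whose gradient at `x_i` is `∇_i f(x)`) gives
`⟨∇_i f(x), x̂_i − x_i⟩ + g_i(x̂_i) − g_i(x_i) ≤ −τ ‖x̂_i − x_i‖² / 2`. Together
`h(x') ≤ h(x) − γ (τ − γ L) / 2 · Σ_{i ∈ S} ‖x̂_i − x_i‖²`, and taking expectations turns
`Σ_{i ∈ S}` into `Σ_i P(i ∈ S) ≥ p_min Σ_i`.
-/

open scoped RealInnerProductSpace
open Filter Topology Finset

noncomputable section

section DescentLemma

variable {E : Type*} [NormedAddCommGroup E] [InnerProductSpace ℝ E] [CompleteSpace E]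

theorem apply_le_add_inner_add_sq_norm_of_gradient_lipschitz {f : E → ℝ}
    (hf : Differentiable ℝ f) {L : ℝ}
    (hL : ∀ a b, ‖gradient f a - gradient f b‖ ≤ L * ‖a - b‖) (x y : E) :
    f y ≤ f x + ⟪gradient f x, y - x⟫ + L / 2 * ‖y - x‖ ^ 2 := by
  set v := y - x
  set ψ : ℝ → ℝ := fun t => f (x + t • v) - t * ⟪gradient f x, v⟫ - L / 2 * t ^ 2 * ‖v‖ ^ 2
  have hψ : ∀ t : ℝ, HasDerivAt ψ
      (⟪gradient f (x + t • v) - gradient f x, v⟫ - L * t * ‖v‖ ^ 2) t := by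
    intro t
    have hline : HasDerivAt (fun t : ℝ => x + t • v) v t := by
      simpa using ((hasDerivAt_id t).smul_const v).const_add x
    have hfline := (hf (x + t • v)).hasGradientAt.hasFDerivAt.comp_hasDerivAt t hline
    refine ((hfline.sub ((hasDerivAt_id t).mul_const ⟪gradient f x, v⟫)).sub
      (((hasDerivAt_pow 2 t).const_mul (L / 2)).mul_const (‖v‖ ^ 2))).congr_deriv ?_
    simp only [InnerProductSpace.toDual_apply_apply, inner_sub_left]
    ring
  have hψ' : ∀ t ∈ interior (Set.Icc (0 : ℝ) 1),
      ⟪gradient f (x + t • v) - gradient f x, v⟫ - L * t * ‖v‖ ^ 2 ≤ 0 := by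
    intro t ht
    rw [interior_Icc] at ht
    refine sub_nonpos.mpr ?_
    calc ⟪gradient f (x + t • v) - gradient f x, v⟫
        ≤ ‖gradient f (x + t • v) - gradient f x‖ * ‖v‖ := real_inner_le_norm _ _
      _ ≤ L * ‖t • v‖ * ‖v‖ := by
          gcongr
          simpa using hL (x + t • v) x
      _ = L * t * ‖v‖ ^ 2 := by
          rw [norm_smul, Real.norm_of_nonneg ht.1.le]
          ring
  have hanti : AntitoneOn ψ (Set.Icc 0 1) :=
    antitoneOn_of_hasDerivWithinAt_nonpos (convex_Icc 0 1)
      (fun t _ => (hψ t).continuousAt.continuousWithinAt)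
      (fun t _ => (hψ t).hasDerivWithinAt) hψ'
  have h01 := hanti (Set.left_mem_Icc.mpr zero_le_one) (Set.right_mem_Icc.mpr zero_le_one)
    zero_le_one
  simp only [ψ, v, zero_smul, one_smul, add_zero, add_sub_cancel] at h01
  linarith

end DescentLemma

theorem ConvexOn.apply_add_smul_sub_le {E : Type*} [AddCommGroup E] [Module ℝ E] {s : Set E}
    {g : E → ℝ} (hg : ConvexOn ℝ s g) {x y : E} (hx : x ∈ s) (hy : y ∈ s) {t : ℝ} (ht0 : 0 ≤ t)
    (ht1 : t ≤ 1) :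
    g (x + t • (y - x)) ≤ g x + t * (g y - g x) := by
  have h := hg.2 hx hy (sub_nonneg.mpr ht1) ht0 (by ring)
  rw [smul_eq_mul, smul_eq_mul] at h
  calc g (x + t • (y - x)) = g ((1 - t) • x + t • y) := by congr 1; module
    _ ≤ g x + t * (g y - g x) := by linarith

section BlockUpdate

variable {ι : Type*} [Fintype ι] [DecidableEq ι] {E : ι → Type*}
  [∀ i, NormedAddCommGroup (E i)] [∀ i, InnerProductSpace ℝ (E i)] [∀ i, CompleteSpace (E i)]

theorem add_sum_le_sub_of_blockUpdate {f : PiLp 2 E → ℝ} (hf : Differentiable ℝ f) {L : ℝ}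
    (hL : ∀ a b, ‖gradient f a - gradient f b‖ ≤ L * ‖a - b‖)
    {g : ∀ i, E i → ℝ} (hg : ∀ i, ConvexOn ℝ Set.univ (g i)) {τ γ : ℝ} (hγ0 : 0 ≤ γ)
    (hγ1 : γ ≤ 1) {x xhat : PiLp 2 E}
    (hbest : ∀ i, ⟪gradient f x i, xhat i - x i⟫ + g i (xhat i) - g i (x i) ≤
      -(τ / 2) * ‖xhat i - x i‖ ^ 2)
    (s : Finset ι) {x' : PiLp 2 E}
    (hx' : ∀ j, x' j = if j ∈ s then x j + γ • (xhat j - x j) else x j) :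
    f x' + ∑ i, g i (x' i) ≤
      f x + ∑ i, g i (x i) - γ * (τ - γ * L) / 2 * ∑ i ∈ s, ‖xhat i - x i‖ ^ 2 := by
  have hstep : ∀ j, (x' - x) j = if j ∈ s then γ • (xhat j - x j) else 0 := by
    intro j
    rw [PiLp.sub_apply, hx']
    split_ifs <;> simp
  have hinner : ⟪gradient f x, x' - x⟫ = γ * ∑ i ∈ s, ⟪gradient f x i, xhat i - x i⟫ := by
    simp only [PiLp.inner_apply, hstep, apply_ite, inner_smul_right, inner_zero_right,
      sum_ite_mem_eq, mul_sum]
  have hnorm : ‖x' - x‖ ^ 2 = γ ^ 2 * ∑ i ∈ s, ‖xhat i - x i‖ ^ 2 := by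
    simp [PiLp.norm_sq_eq_of_L2, hstep, apply_ite, norm_smul, mul_pow, mul_sum]
  have hgsum : ∑ i, g i (x' i) ≤
      ∑ i, g i (x i) + γ * (∑ i ∈ s, g i (xhat i) - ∑ i ∈ s, g i (x i)) := by
    rw [← sum_sub_distrib, mul_sum, ← sum_ite_mem_eq s, ← sum_add_distrib]
    refine sum_le_sum fun i _ => ?_
    rw [hx']
    split_ifs
    · exact (hg i).apply_add_smul_sub_le trivial trivial hγ0 hγ1
    · simp
  have hbest_sum := sum_le_sum fun i (_ : i ∈ s) => hbest i
  simp only [sum_sub_distrib, sum_add_distrib, ← mul_sum] at hbest_sum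
  have hf_le := apply_le_add_inner_add_sq_norm_of_gradient_lipschitz hf hL x x'
  rw [hinner, hnorm] at hf_le
  linarith [mul_le_mul_of_nonneg_left hbest_sum hγ0]

end BlockUpdate

section RandomBlocks

variable {ι : Type*} [Fintype ι] [DecidableEq ι]

theorem sum_mul_sum_mem_eq_sum_marginal_mul (p : Finset ι → ℝ) (c : ι → ℝ) :
    ∑ s, p s * ∑ i ∈ s, c i = ∑ i, (∑ s, if i ∈ s then p s else 0) * c i := by
  calc ∑ s, p s * ∑ i ∈ s, c i = ∑ s, ∑ i, if i ∈ s then p s * c i else 0 := by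
        refine sum_congr rfl fun s _ => ?_
        rw [mul_sum, ← sum_ite_mem_eq s]
    _ = ∑ i, (∑ s, if i ∈ s then p s else 0) * c i := by
        rw [sum_comm]
        simp only [sum_mul, ite_mul, zero_mul]

theorem sum_mul_le_sub_of_le_sub_sum_mem {p : Finset ι → ℝ} (hp0 : ∀ s, 0 ≤ p s)
    (hp1 : ∑ s, p s = 1) {pmin : ℝ} (hmarg : ∀ i, pmin ≤ ∑ s, if i ∈ s then p s else 0)
    {H : Finset ι → ℝ} {h₀ K : ℝ} (hK : 0 ≤ K) {c : ι → ℝ} (hc : ∀ i, 0 ≤ c i)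
    (hH : ∀ s, H s ≤ h₀ - K * ∑ i ∈ s, c i) :
    ∑ s, p s * H s ≤ h₀ - K * (pmin * ∑ i, c i) := by
  calc ∑ s, p s * H s ≤ ∑ s, p s * (h₀ - K * ∑ i ∈ s, c i) :=
        sum_le_sum fun s _ => mul_le_mul_of_nonneg_left (hH s) (hp0 s)
    _ = h₀ - K * ∑ i, (∑ s, if i ∈ s then p s else 0) * c i := by
        rw [← sum_mul_sum_mem_eq_sum_marginal_mul]
        simp only [mul_sub, sum_sub_distrib, ← sum_mul, hp1, one_mul, mul_left_comm _ K,
          ← mul_sum]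
    _ ≤ h₀ - K * (pmin * ∑ i, c i) := by
        gcongr
        rw [mul_sum]
        exact sum_le_sum fun i _ => mul_le_mul_of_nonneg_right (hmarg i) (hc i)

end RandomBlocks

theorem stmt8_general
    {n : ℕ} {m : Fin n → ℕ}
    (X : ∀ j, Set (EuclideanSpace ℝ (Fin (m j))))
    (f : TS n m → ℝ) (hf : ContDiff ℝ 1 f)
    (Lf : ℝ)
    -- `∇f` is Lipschitz continuous with constant `L_{∇f}`
    (hfL : ∀ a b : TS n m, ‖gradient f a - gradient f b‖ ≤ Lf * ‖a - b‖)
    (g : ∀ j, EuclideanSpace ℝ (Fin (m j)) → ℝ) (hg : ∀ j, ConvexOn ℝ Set.univ (g j))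
    (ft : ∀ j, EuclideanSpace ℝ (Fin (m j)) → TS n m → ℝ)
    (τ : ℝ)
    -- `f̃_i(·, y)` is continuously differentiable and `τ`-strongly convex on `X_i`
    (hsc : ∀ i, ∀ y : TS n m, (∀ j, y j ∈ X j) → ∀ u ∈ X i, ∀ u' ∈ X i,
      ft i u y ≥ ft i u' y + ⟪gradient (fun v => ft i v y) u', u - u'⟫ + τ / 2 * ‖u - u'‖ ^ 2)
    -- gradient consistency: `∇_{x_i} f̃_i(x_i, x) = ∇_{x_i} f(x)` for all `x ∈ X`
    (hgc : ∀ i, ∀ x : TS n m, (∀ j, x j ∈ X j) →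
      gradient (fun u => ft i u x) (x i) = gradient f x i)
    -- the current point `x ∈ X`, step-size `0 < γ ≤ 1` with `γ L_{∇f} < τ`
    (x : TS n m) (hx : ∀ j, x j ∈ X j)
    (γ : ℝ) (hγ0 : 0 < γ) (hγ1 : γ ≤ 1) (hγτ : γ * Lf < τ)
    -- the best responses `x̂_i` for all blocks
    (xhat : TS n m)
    (hxhat : ∀ i, xhat i ∈ X i ∧ IsMinOn (fun u => ft i u x + g i u) (X i) (xhat i))
    -- the distribution `p` of the random subset `S`, with `P(i ∈ S) ≥ p_min > 0`
    (p : Finset (Fin n) → ℝ) (hp0 : ∀ s, 0 ≤ p s) (hp1 : ∑ s : Finset (Fin n), p s = 1)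
    (pmin : ℝ)
    (hmarg : ∀ i : Fin n, pmin ≤ ∑ s : Finset (Fin n), if i ∈ s then p s else 0)
    -- the random updated point `X'`
    (x' : Finset (Fin n) → TS n m)
    (hx' : ∀ s j, x' s j = if j ∈ s then x j + γ • (xhat j - x j) else x j) :
    ∑ s : Finset (Fin n), p s * (f (x' s) + ∑ i, g i (x' s i)) ≤
      f x + ∑ i, g i (x i) - γ * (τ - γ * Lf) / 2 * pmin * ‖xhat - x‖ ^ 2 := by
  have hbest : ∀ i, ⟪gradient f x i, xhat i - x i⟫ + g i (xhat i) - g i (x i) ≤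
      -(τ / 2) * ‖xhat i - x i‖ ^ 2 := by
    intro i
    have hsurrogate := hsc i x hx (xhat i) (hxhat i).1 (x i) (hx i)
    have hmin := isMinOn_iff.mp (hxhat i).2 (x i) (hx i)
    rw [hgc i x hx] at hsurrogate
    linarith
  have hK : 0 ≤ γ * (τ - γ * Lf) / 2 := by have := sub_pos.mpr hγτ; positivity
  have hdescent := sum_mul_le_sub_of_le_sub_sum_mem hp0 hp1 hmarg hK (fun i => sq_nonneg _)
    fun s => add_sum_le_sub_of_blockUpdate (hf.differentiable one_ne_zero) hfL hg hγ0.le hγ1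
      hbest s (hx' s)
  rw [PiLp.norm_sq_eq_of_L2, mul_assoc _ pmin]
  simpa only [PiLp.sub_apply] using hdescent

/-- **one-step randomized sufficient descent.** With `S` a random subset of
blocks with `P(i ∈ S) ≥ p_min > 0` (described by its distribution `p` on `Finset (Fin n)`)
and `X'` the corresponding random PSCA update,
`E[h(X')] ≤ h(x) − (γ(τ − γ L_{∇f})/2) p_min ‖x̂ − x‖²` where `h = f + Σ_i g_i`. -/
theorem stmt8
    {n : ℕ} {m : Fin n → ℕ}
    (X : ∀ j, Set (EuclideanSpace ℝ (Fin (m j))))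
    (hXne : ∀ j, (X j).Nonempty) (hXcl : ∀ j, IsClosed (X j)) (hXcv : ∀ j, Convex ℝ (X j))
    (f : TS n m → ℝ) (hf : ContDiff ℝ 1 f)
    (Lf : ℝ)
    -- `∇f` is Lipschitz continuous with constant `L_{∇f}`
    (hfL : ∀ a b : TS n m, ‖gradient f a - gradient f b‖ ≤ Lf * ‖a - b‖)
    (g : ∀ j, EuclideanSpace ℝ (Fin (m j)) → ℝ) (hg : ∀ j, ConvexOn ℝ Set.univ (g j))
    (ft : ∀ j, EuclideanSpace ℝ (Fin (m j)) → TS n m → ℝ)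
    (τ : ℝ) (hτ : 0 < τ)
    -- `f̃_i(·, y)` is continuously differentiable and `τ`-strongly convex on `X_i`
    (hC1 : ∀ i, ∀ y : TS n m, (∀ j, y j ∈ X j) → ContDiff ℝ 1 fun u => ft i u y)
    (hsc : ∀ i, ∀ y : TS n m, (∀ j, y j ∈ X j) → ∀ u ∈ X i, ∀ u' ∈ X i,
      ft i u y ≥ ft i u' y + ⟪gradient (fun v => ft i v y) u', u - u'⟫ + τ / 2 * ‖u - u'‖ ^ 2)
    -- gradient consistency: `∇_{x_i} f̃_i(x_i, x) = ∇_{x_i} f(x)` for all `x ∈ X`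
    (hgc : ∀ i, ∀ x : TS n m, (∀ j, x j ∈ X j) →
      gradient (fun u => ft i u x) (x i) = gradient f x i)
    -- the current point `x ∈ X`, step-size `0 < γ ≤ 1` with `γ L_{∇f} < τ`
    (x : TS n m) (hx : ∀ j, x j ∈ X j)
    (γ : ℝ) (hγ0 : 0 < γ) (hγ1 : γ ≤ 1) (hγτ : γ * Lf < τ)
    -- the best responses `x̂_i` for all blocks
    (xhat : TS n m)
    (hxhat : ∀ i, xhat i ∈ X i ∧ IsMinOn (fun u => ft i u x + g i u) (X i) (xhat i))
    -- the distribution `p` of the random subset `S`, with `P(i ∈ S) ≥ p_min > 0`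
    (p : Finset (Fin n) → ℝ) (hp0 : ∀ s, 0 ≤ p s) (hp1 : ∑ s : Finset (Fin n), p s = 1)
    (pmin : ℝ) (hpmin : 0 < pmin)
    (hmarg : ∀ i : Fin n, pmin ≤ ∑ s : Finset (Fin n), if i ∈ s then p s else 0)
    -- the random updated point `X'`
    (x' : Finset (Fin n) → TS n m)
    (hx' : ∀ s j, x' s j = if j ∈ s then x j + γ • (xhat j - x j) else x j) :
    ∑ s : Finset (Fin n), p s * (f (x' s) + ∑ i, g i (x' s i)) ≤
      f x + ∑ i, g i (x i) - γ * (τ - γ * Lf) / 2 * pmin * ‖xhat - x‖ ^ 2 :=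
  stmt8_general X f hf Lf hfL g hg ft τ hsc hgc x hx γ hγ0 hγ1 hγτ xhat hxhat p hp0 hp1 pmin hmarg
    x' hx'
end
end

section
/- Let X_i ⊆ ℝ^{m_i} be nonempty closed convex, X = ∏_{j=1}^n X_j, f : ℝ^N → ℝ continuously differentiable, g_i : ℝ^{m_i} → ℝ convex, and let f̃_i(·,x) be continuously differentiable, convex, and gradient consistent (∇_{x_i} f̃_i(x_i,x) = ∇_{x_i} f(x)), with ∇_{x_i} f̃_i(·,x) Lipschitz with constant L_i on X_i. Fix x ∈ X and define x̂_i = argmin_{u∈X_i} f̃_i(u,x) + g_i(u) and ỹ_i = argmin_{u∈X_i} {⟨∇_{x_i} f(x), u − x_i⟩ + g_i(u) + (1/2)‖u − x_i‖²} (assuming both minimizers exist). Then ‖x̂_i − ỹ_i‖ ≤ (1 + L_i)‖x_i − x̂_i‖. -/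
/-!
Both minimizers satisfy a first-order variational inequality over the convex set `X_i`
(for a differentiable `φ` plus a convex `g`, obtained by replacing `g` by its chord along a
segment). Adding the inequality for `x̂` tested at `ỹ` to the one for `ỹ` tested at `x̂` cancels
`g` and, after gradient consistency, leaves
`‖ỹ - x̂‖² ≤ ⟪∇f̃_i(x̂) - ∇f̃_i(x_i), ỹ - x̂⟫ + ⟪x_i - x̂, ỹ - x̂⟫`;
Cauchy–Schwarz and the Lipschitz bound on `∇f̃_i` give the claim.
-/

open scoped RealInnerProductSpace
open Filter Topology Finset

noncomputable section

theorem IsMinOn.sub_le_of_hasFDerivAt_of_convexOn {E : Type*} [NormedAddCommGroup E]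
    [NormedSpace ℝ E] {S : Set E} {φ g : E → ℝ}
    {φ' : E →L[ℝ] ℝ} {z u : E} (hS : Convex ℝ S) (hg : ConvexOn ℝ S g)
    (hφ : HasFDerivAt φ φ' z) (hmin : IsMinOn (fun w => φ w + g w) S z) (hz : z ∈ S)
    (hu : u ∈ S) : g z - g u ≤ φ' (u - z) := by
  -- Along the segment from `z` to `u`, replacing `g` by its chord keeps `0` a minimum on `[0, 1]`.
  set ψ : ℝ → ℝ := fun t => φ (z + t • (u - z)) + t * (g u - g z)
  have hψmin : IsMinOn ψ (Set.Icc 0 1) 0 := fun t ⟨ht0, ht1⟩ => by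
    have hw : z + t • (u - z) = (1 - t) • z + t • u := by module
    have hchord : g (z + t • (u - z)) ≤ (1 - t) * g z + t * g u :=
      hw ▸ hg.2 hz hu (sub_nonneg.2 ht1) ht0 (by ring)
    have hmin_w : φ z + g z ≤ φ (z + t • (u - z)) + g (z + t • (u - z)) :=
      hmin (hw ▸ hS hz hu (sub_nonneg.2 ht1) ht0 (by ring))
    show ψ 0 ≤ ψ t
    simp only [ψ, zero_smul, add_zero, zero_mul]
    nlinarith
  have hψ : HasDerivAt ψ (φ' (u - z) + (g u - g z)) 0 := by
    have hline : HasDerivAt (fun t : ℝ => z + t • (u - z)) (u - z) 0 := by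
      simpa using ((hasDerivAt_id (0 : ℝ)).smul_const (u - z)).const_add z
    exact (hφ.comp_hasDerivAt_of_eq 0 hline (by simp)).add (hasDerivAt_mul_const _)
      |>.congr_deriv (by simp)
  have hone : (1 : ℝ) ∈ posTangentConeAt (Set.Icc 0 1) 0 :=
    mem_posTangentConeAt_of_segment_subset (by simp [segment_eq_Icc])
  have hnonneg := hψmin.localize.hasFDerivWithinAt_nonneg hψ.hasFDerivAt.hasFDerivWithinAt hone
  simp only [ContinuousLinearMap.toSpanSingleton_apply, one_smul] at hnonneg
  linarith

section InnerProductSpace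

variable {E : Type*} [NormedAddCommGroup E] [InnerProductSpace ℝ E]

theorem hasFDerivAt_inner_sub_add_half_norm_sub_sq (a c y : E) :
    HasFDerivAt (fun u => ⟪a, u - c⟫ + 1 / 2 * ‖u - c‖ ^ 2) (innerSL ℝ (a + (y - c))) y := by
  have hsub : HasFDerivAt (fun u : E => u - c) (ContinuousLinearMap.id ℝ E) y :=
    (hasFDerivAt_id y).sub_const c
  refine (((innerSL ℝ a).hasFDerivAt.comp y hsub).add
    (hsub.norm_sq.const_mul (1 / 2 : ℝ))).congr_fderiv ?_
  ext v
  simp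

theorem norm_sub_le_of_isMinOn_of_isMinOn_prox [CompleteSpace E] {S : Set E} {φ g : E → ℝ}
    {G a c xhat ytil : E} {L : ℝ} (hS : Convex ℝ S) (hg : ConvexOn ℝ S g)
    (hφ : HasGradientAt φ G xhat) (hG : ‖G - a‖ ≤ L * ‖xhat - c‖)
    (hxhatS : xhat ∈ S) (hxhat : IsMinOn (fun u => φ u + g u) S xhat)
    (hytilS : ytil ∈ S)
    (hytil : IsMinOn (fun u => ⟪a, u - c⟫ + g u + 1 / 2 * ‖u - c‖ ^ 2) S ytil) :
    ‖xhat - ytil‖ ≤ (1 + L) * ‖c - xhat‖ := by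
  have hbest := hxhat.sub_le_of_hasFDerivAt_of_convexOn hS hg
    (hasGradientAt_iff_hasFDerivAt.1 hφ) hxhatS hytilS
  have hprox : IsMinOn (fun u => (⟪a, u - c⟫ + 1 / 2 * ‖u - c‖ ^ 2) + g u) S ytil := by
    convert hytil using 2
    ring
  have hvi_prox := hprox.sub_le_of_hasFDerivAt_of_convexOn hS hg
    (hasFDerivAt_inner_sub_add_half_norm_sub_sq a c ytil) hytilS hxhatS
  rw [InnerProductSpace.toDual_apply_apply] at hbest
  rw [innerSL_apply_apply] at hvi_prox
  have hmono : ‖ytil - xhat‖ ^ 2 ≤ ⟪G - a, ytil - xhat⟫ + ⟪c - xhat, ytil - xhat⟫ := by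
    have : ⟪G, ytil - xhat⟫ + ⟪a + (ytil - c), xhat - ytil⟫ =
        ⟪G - a, ytil - xhat⟫ + ⟪c - xhat, ytil - xhat⟫ - ‖ytil - xhat‖ ^ 2 := by
      rw [← real_inner_self_eq_norm_sq]
      simp only [inner_sub_left, inner_add_left, inner_sub_right]
      ring
    linarith
  have hd : ‖ytil - xhat‖ ≤ ‖G - a‖ + ‖c - xhat‖ := by
    have hsq : ‖ytil - xhat‖ ^ 2 ≤ (‖G - a‖ + ‖c - xhat‖) * ‖ytil - xhat‖ := by
      refine hmono.trans ?_
      rw [add_mul]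
      gcongr <;> exact real_inner_le_norm _ _
    nlinarith [norm_nonneg (ytil - xhat), norm_nonneg (G - a), norm_nonneg (c - xhat)]
  rw [norm_sub_rev xhat c] at hG
  calc ‖xhat - ytil‖ = ‖ytil - xhat‖ := norm_sub_rev _ _
    _ ≤ (1 + L) * ‖c - xhat‖ := by linarith

end InnerProductSpace

theorem stmt13_general
    {n : ℕ} {m : Fin n → ℕ} (i : Fin n)
    (X : ∀ j, Set (EuclideanSpace ℝ (Fin (m j))))
    (hXcv : ∀ j, Convex ℝ (X j))
    (f : TS n m → ℝ)
    (g : EuclideanSpace ℝ (Fin (m i)) → ℝ) (hg : ConvexOn ℝ Set.univ g)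
    (ft : EuclideanSpace ℝ (Fin (m i)) → TS n m → ℝ)
    -- `f̃_i(·, x)` is continuously differentiable and convex on `X_i`
    (hC1 : ∀ y : TS n m, (∀ j, y j ∈ X j) → ContDiff ℝ 1 fun u => ft u y)
    -- gradient consistency: `∇_{x_i} f̃_i(x_i, x) = ∇_{x_i} f(x)` for all `x ∈ X`
    (hgc : ∀ y : TS n m, (∀ j, y j ∈ X j) →
      gradient (fun u => ft u y) (y i) = gradient f y i)
    -- `∇_{x_i} f̃_i(·, x)` is Lipschitz with constant `L_i` on `X_i`
    (Li : ℝ) (hftLip : ∀ y : TS n m, (∀ j, y j ∈ X j) → ∀ u ∈ X i, ∀ v ∈ X i,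
      ‖gradient (fun w => ft w y) u - gradient (fun w => ft w y) v‖ ≤ Li * ‖u - v‖)
    -- the fixed point `x ∈ X`
    (x : TS n m) (hx : ∀ j, x j ∈ X j)
    -- `x̂_i = argmin_{u ∈ X_i} f̃_i(u, x) + g_i(u)`
    (xhat : EuclideanSpace ℝ (Fin (m i))) (hxhatX : xhat ∈ X i)
    (hxhat : IsMinOn (fun u => ft u x + g u) (X i) xhat)
    -- `ỹ_i = argmin_{u ∈ X_i} ⟨∇_{x_i} f(x), u − x_i⟩ + g_i(u) + ½‖u − x_i‖²`
    (ytil : EuclideanSpace ℝ (Fin (m i))) (hytilX : ytil ∈ X i)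
    (hytil : IsMinOn
      (fun u => ⟪gradient f x i, u - x i⟫ + g u + 1 / 2 * ‖u - x i‖ ^ 2) (X i) ytil) :
    ‖xhat - ytil‖ ≤ (1 + Li) * ‖x i - xhat‖ := by
  have hgrad := (((hC1 x hx).differentiable one_ne_zero) xhat).hasGradientAt
  have hLip : ‖gradient (fun u => ft u x) xhat - gradient f x i‖ ≤ Li * ‖xhat - x i‖ :=
    hgc x hx ▸ hftLip x hx xhat hxhatX (x i) (hx i)
  exact norm_sub_le_of_isMinOn_of_isMinOn_prox (hXcv i) (hg.subset (Set.subset_univ _) (hXcv i))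
    hgrad hLip hxhatX hxhat hytilX hytil

/-- With `x̂_i` the best response and `ỹ_i` the proximal-gradient point
at `x ∈ X`, one has `‖x̂_i − ỹ_i‖ ≤ (1 + L_i) ‖x_i − x̂_i‖`. -/
theorem stmt13
    {n : ℕ} {m : Fin n → ℕ} (i : Fin n)
    (X : ∀ j, Set (EuclideanSpace ℝ (Fin (m j))))
    (hXne : ∀ j, (X j).Nonempty) (hXcl : ∀ j, IsClosed (X j)) (hXcv : ∀ j, Convex ℝ (X j))
    (f : TS n m → ℝ) (hf : ContDiff ℝ 1 f)
    (g : EuclideanSpace ℝ (Fin (m i)) → ℝ) (hg : ConvexOn ℝ Set.univ g)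
    (ft : EuclideanSpace ℝ (Fin (m i)) → TS n m → ℝ)
    -- `f̃_i(·, x)` is continuously differentiable and convex on `X_i`
    (hC1 : ∀ y : TS n m, (∀ j, y j ∈ X j) → ContDiff ℝ 1 fun u => ft u y)
    (hcvx : ∀ y : TS n m, (∀ j, y j ∈ X j) → ConvexOn ℝ (X i) fun u => ft u y)
    -- gradient consistency: `∇_{x_i} f̃_i(x_i, x) = ∇_{x_i} f(x)` for all `x ∈ X`
    (hgc : ∀ y : TS n m, (∀ j, y j ∈ X j) →
      gradient (fun u => ft u y) (y i) = gradient f y i)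
    -- `∇_{x_i} f̃_i(·, x)` is Lipschitz with constant `L_i` on `X_i`
    (Li : ℝ) (hftLip : ∀ y : TS n m, (∀ j, y j ∈ X j) → ∀ u ∈ X i, ∀ v ∈ X i,
      ‖gradient (fun w => ft w y) u - gradient (fun w => ft w y) v‖ ≤ Li * ‖u - v‖)
    -- the fixed point `x ∈ X`
    (x : TS n m) (hx : ∀ j, x j ∈ X j)
    -- `x̂_i = argmin_{u ∈ X_i} f̃_i(u, x) + g_i(u)`
    (xhat : EuclideanSpace ℝ (Fin (m i))) (hxhatX : xhat ∈ X i)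
    (hxhat : IsMinOn (fun u => ft u x + g u) (X i) xhat)
    -- `ỹ_i = argmin_{u ∈ X_i} ⟨∇_{x_i} f(x), u − x_i⟩ + g_i(u) + ½‖u − x_i‖²`
    (ytil : EuclideanSpace ℝ (Fin (m i))) (hytilX : ytil ∈ X i)
    (hytil : IsMinOn
      (fun u => ⟪gradient f x i, u - x i⟫ + g u + 1 / 2 * ‖u - x i‖ ^ 2) (X i) ytil) :
    ‖xhat - ytil‖ ≤ (1 + Li) * ‖x i - xhat‖ :=
  stmt13_general i X hXcv f g hg ft hC1 hgc Li hftLip x hx xhat hxhatX hxhat ytil hytilX hytil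
end
end

section
/- Let X_i ⊆ ℝ^{m_i} be nonempty closed convex, X = ∏_{j=1}^n X_j, f : ℝ^N → ℝ continuously differentiable, g_i : ℝ^{m_i} → ℝ convex, h = f + Σ_i g_i, and let f̃_i(·,x) be continuously differentiable, τ-strongly convex, gradient consistent (∇_{x_i} f̃_i(x_i,x) = ∇_{x_i} f(x)), with ∇_{x_i} f̃_i(·,x) Lipschitz with constant L_i on X_i; set L = max_i L_i. For x ∈ X define x̂_i(x) = argmin_{u∈X_i} f̃_i(u,x) + g_i(u) and the proximal gradient ∇̃h(x) = x − argmin_{y∈X} {⟨∇f(x), y − x⟩ + Σ_i g_i(y_i) + (1/2)‖y − x‖²}. Then ‖∇̃h(x)‖² ≤ 2(L² + 2L + 2)‖x̂(x) − x‖², where x̂(x) = (x̂_1(x),…,x̂_n(x)). -/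
/-!
Both `x̂(x)` and the proximal point `y*` are proximal points of `G(y) = Σ_i g_i(y_i)` over `X`:
by first-order optimality of each block, `x̂ = prox_G(x̂ − γ)` with `γ_i = ∇f̃_i(x̂_i, x)`, and
`y* = prox_G(x − ∇f(x))`. The proximal map is nonexpansive, so
`‖y* − x̂‖ ≤ ‖x − x̂‖ + ‖γ − ∇f(x)‖ ≤ (1 + L)‖x̂ − x‖`, using gradient consistency
`∇f(x)_i = ∇f̃_i(x_i, x)` and the Lipschitz bound. Hence `‖x − y*‖ ≤ (2 + L)‖x̂ − x‖`, and
`(2 + L)² ≤ 2(L² + 2L + 2)`.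
-/

open scoped RealInnerProductSpace
open Filter Topology Finset

noncomputable section

section InnerProductSpace

variable {E : Type*} [NormedAddCommGroup E] [InnerProductSpace ℝ E]

theorem IsMinOn.le_inner_add_of_hasGradientAt [CompleteSpace E] {C : Set E} (hC : Convex ℝ C)
    {F g : E → ℝ} {F' p u : E} (hmin : IsMinOn (F + g) C p) (hF : HasGradientAt F F' p)
    (hg : ConvexOn ℝ C g) (hp : p ∈ C) (hu : u ∈ C) :
    g p ≤ ⟪F', u - p⟫ + g u := by
  set ψ : ℝ → ℝ := fun t => F (p + t • (u - p)) + t * (g u - g p)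
  -- convexity bounds `g` above by its chord on `[p, u]`, so `ψ` is minimal on `[0, 1]` at `0`
  have hψmin : IsMinOn ψ (Set.Icc 0 1) 0 := by
    intro t ht
    have hmem : p + t • (u - p) ∈ C := hC.add_smul_sub_mem hp hu ht
    have hgt : g (p + t • (u - p)) ≤ (1 - t) * g p + t * g u := by
      rw [show p + t • (u - p) = (1 - t) • p + t • u by module]
      exact hg.2 hp hu (by linarith [ht.2]) ht.1 (by ring)
    have := hmin hmem
    simp only [Set.mem_ofPred_eq, Pi.add_apply, ψ, zero_smul, add_zero, zero_mul] at this ⊢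
    linarith
  have hline : HasDerivAt (fun t : ℝ => p + t • (u - p)) (u - p) 0 := by
    simpa using ((hasDerivAt_id (0 : ℝ)).smul_const (u - p)).const_add p
  have hψ : HasDerivAt ψ (⟪F', u - p⟫ + (g u - g p)) 0 := by
    have hF0 : HasFDerivAt F (InnerProductSpace.toDual ℝ E F') (p + (0 : ℝ) • (u - p)) := by
      simpa using hF.hasFDerivAt
    have := (hF0.comp_hasDerivAt 0 hline).fun_add ((hasDerivAt_id (0 : ℝ)).mul_const (g u - g p))
    simpa [InnerProductSpace.toDual_apply_apply, Function.comp_def] using this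
  have hcone : (1 : ℝ) ∈ posTangentConeAt (Set.Icc (0 : ℝ) 1) 0 := by
    simpa using sub_mem_posTangentConeAt_of_segment_subset (segment_eq_Icc zero_le_one).subset
  have := hψmin.localize.hasFDerivWithinAt_nonneg hψ.hasDerivWithinAt.hasFDerivWithinAt hcone
  simp only [ContinuousLinearMap.toSpanSingleton_apply, smul_eq_mul, one_mul] at this
  linarith

/-- With `s = φ p`, `t = φ q`, the hypotheses say `p = prox_φ a` and `q = prox_φ b`; this is
nonexpansiveness of the proximal map. -/
theorem norm_sub_le_of_inner_le_add {p q a b : E} {s t : ℝ}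
    (hp : s ≤ ⟪p - a, q - p⟫ + t) (hq : t ≤ ⟪q - b, p - q⟫ + s) : ‖q - p‖ ≤ ‖b - a‖ := by
  have hsq : ‖q - p‖ ^ 2 ≤ ⟪b - a, q - p⟫ := by
    have : ⟪q - b, p - q⟫ = ⟪b - a, q - p⟫ - ‖q - p‖ ^ 2 - ⟪p - a, q - p⟫ := by
      rw [← real_inner_self_eq_norm_sq, ← inner_sub_left, ← inner_sub_left,
        show p - q = -(q - p) by abel, inner_neg_right, ← inner_neg_left]
      congr 1; abel
    linarith
  have := hsq.trans (real_inner_le_norm _ _)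
  nlinarith [norm_nonneg (q - p), norm_nonneg (b - a)]

theorem hasGradientAt_inner_sub_add_half_norm_sub_sq [CompleteSpace E] (c x y : E) :
    HasGradientAt (fun z => ⟪c, z - x⟫ + 1 / 2 * ‖z - x‖ ^ 2) (c + (y - x)) y := by
  rw [hasGradientAt_iff_hasFDerivAt]
  have h1 := (hasFDerivAt_const c y).inner ℝ ((hasFDerivAt_id y).sub_const x)
  have h2 := (((hasFDerivAt_id y).sub_const x).norm_sq).const_mul (1 / 2 : ℝ)
  refine (h1.fun_add h2).congr_fderiv ?_
  ext v; simp

theorem IsMinOn.le_inner_add_of_inner_add_half_norm_sq [CompleteSpace E] {C : Set E}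
    (hC : Convex ℝ C) {G : E → ℝ} (hG : ConvexOn ℝ C G) {c x q u : E}
    (hmin : IsMinOn (fun y => ⟪c, y - x⟫ + G y + 1 / 2 * ‖y - x‖ ^ 2) C q) (hq : q ∈ C)
    (hu : u ∈ C) : G q ≤ ⟪q - (x - c), u - q⟫ + G u := by
  have hmin' : IsMinOn ((fun y => ⟪c, y - x⟫ + 1 / 2 * ‖y - x‖ ^ 2) + G) C q := fun y hy => by
    have := hmin hy
    simp only [Set.mem_ofPred_eq, Pi.add_apply] at this ⊢
    linarith
  have := hmin'.le_inner_add_of_hasGradientAt hC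
    (hasGradientAt_inner_sub_add_half_norm_sub_sq c x q) hG hq hu
  rwa [show c + (q - x) = q - (x - c) by abel] at this

end InnerProductSpace

namespace PiLp

variable {ι : Type*} {β : ι → Type*}

theorem convex_setOf_forall_mem {p : ENNReal} [∀ i, AddCommGroup (β i)] [∀ i, Module ℝ (β i)]
    {s : ∀ i, Set (β i)} (hs : ∀ i, Convex ℝ (s i)) :
    Convex ℝ {z : PiLp p β | ∀ i, z i ∈ s i} :=
  fun _ hy _ hz _ _ ha hb hab i => hs i (hy i) (hz i) ha hb hab

theorem convexOn_sum_apply [Fintype ι] {p : ENNReal} [∀ i, AddCommGroup (β i)]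
    [∀ i, Module ℝ (β i)]
    {g : ∀ i, β i → ℝ} (hg : ∀ i, ConvexOn ℝ Set.univ (g i)) :
    ConvexOn ℝ Set.univ fun z : PiLp p β => ∑ i, g i (z i) := by
  refine ⟨convex_univ, fun y _ z _ a b ha hb hab => ?_⟩
  calc ∑ i, g i ((a • y + b • z) i) = ∑ i, g i (a • y i + b • z i) := rfl
    _ ≤ ∑ i, (a * g i (y i) + b * g i (z i)) := Finset.sum_le_sum fun i _ =>
      (hg i).2 (Set.mem_univ _) (Set.mem_univ _) ha hb hab
    _ = a * ∑ i, g i (y i) + b * ∑ i, g i (z i) := by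
      rw [Finset.sum_add_distrib, Finset.mul_sum, Finset.mul_sum]

theorem norm_le_mul_norm_of_forall [Fintype ι] [∀ i, SeminormedAddCommGroup (β i)]
    {a b : PiLp 2 β} {L : ℝ}
    (h : ∀ i, ‖a i‖ ≤ L * ‖b i‖) : ‖a‖ ≤ L * ‖b‖ := by
  rcases le_or_gt 0 L with hL | hL
  · refine (pow_le_pow_iff_left₀ (norm_nonneg a) (by positivity) two_ne_zero).1 ?_
    rw [mul_pow, PiLp.norm_sq_eq_of_L2, PiLp.norm_sq_eq_of_L2, Finset.mul_sum]
    exact Finset.sum_le_sum fun i _ => by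
      simpa [mul_pow] using pow_le_pow_left₀ (norm_nonneg _) (h i) 2
  · have hb : ∀ i, ‖b i‖ = 0 := fun i =>
      le_antisymm (nonpos_of_mul_nonneg_right ((norm_nonneg _).trans (h i)) hL) (norm_nonneg _)
    have ha : ∀ i, ‖a i‖ = 0 := fun i =>
      le_antisymm (by simpa [hb i] using h i) (norm_nonneg _)
    simp [PiLp.norm_eq_of_L2, ha, hb]

theorem sum_le_inner_add_of_forall_isMinOn [Fintype ι] [∀ i, NormedAddCommGroup (β i)]
    [∀ i, InnerProductSpace ℝ (β i)] [∀ i, CompleteSpace (β i)] {X : ∀ i, Set (β i)}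
    (hX : ∀ i, Convex ℝ (X i)) {F g : ∀ i, β i → ℝ} (hg : ∀ i, ConvexOn ℝ (X i) (g i))
    {p u : PiLp 2 β} (hF : ∀ i, DifferentiableAt ℝ (F i) (p i)) (hp : ∀ i, p i ∈ X i)
    (hmin : ∀ i, IsMinOn (F i + g i) (X i) (p i)) (hu : ∀ i, u i ∈ X i) :
    ∑ i, g i (p i) ≤ ⟪WithLp.toLp 2 fun i => gradient (F i) (p i), u - p⟫ + ∑ i, g i (u i) := by
  rw [PiLp.inner_apply, ← Finset.sum_add_distrib]
  exact Finset.sum_le_sum fun i _ =>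
    (hmin i).le_inner_add_of_hasGradientAt (hX i) (hF i).hasGradientAt (hg i) (hp i) (hu i)

end PiLp

theorem stmt14_general
    {n : ℕ} {m : Fin n → ℕ}
    (X : ∀ j, Set (EuclideanSpace ℝ (Fin (m j))))
    (hXcv : ∀ j, Convex ℝ (X j))
    (f : TS n m → ℝ)
    (g : ∀ j, EuclideanSpace ℝ (Fin (m j)) → ℝ) (hg : ∀ j, ConvexOn ℝ Set.univ (g j))
    (ft : ∀ j, EuclideanSpace ℝ (Fin (m j)) → TS n m → ℝ)
    -- `f̃_i(·, y)` is continuously differentiable and `τ`-strongly convex on `X_i`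
    (hC1 : ∀ i, ∀ y : TS n m, (∀ j, y j ∈ X j) → ContDiff ℝ 1 fun u => ft i u y)
    -- gradient consistency: `∇_{x_i} f̃_i(x_i, x) = ∇_{x_i} f(x)` for all `x ∈ X`
    (hgc : ∀ i, ∀ y : TS n m, (∀ j, y j ∈ X j) →
      gradient (fun u => ft i u y) (y i) = gradient f y i)
    -- `∇_{x_i} f̃_i(·, x)` is Lipschitz with constant `L = max_i L_i`
    (L : ℝ) (hftLip : ∀ i, ∀ y : TS n m, (∀ j, y j ∈ X j) →
      ∀ u v : EuclideanSpace ℝ (Fin (m i)),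
      ‖gradient (fun w => ft i w y) u - gradient (fun w => ft i w y) v‖ ≤ L * ‖u - v‖)
    -- the fixed point `x ∈ X`
    (x : TS n m) (hx : ∀ j, x j ∈ X j)
    -- the best responses `x̂_i(x)`
    (xhat : TS n m)
    (hxhat : ∀ i, xhat i ∈ X i ∧ IsMinOn (fun u => ft i u x + g i u) (X i) (xhat i))
    -- the proximal point defining `∇̃h(x) = x − y^*`
    (ystar : TS n m) (hystarX : ∀ j, ystar j ∈ X j)
    (hystar : IsMinOn
      (fun y => ⟪gradient f x, y - x⟫ + (∑ i, g i (y i)) + 1 / 2 * ‖y - x‖ ^ 2)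
      {z : TS n m | ∀ j, z j ∈ X j} ystar) :
    ‖x - ystar‖ ^ 2 ≤ 2 * (L ^ 2 + 2 * L + 2) * ‖xhat - x‖ ^ 2 := by
  set γ : TS n m := WithLp.toLp 2 fun i => gradient (fun u => ft i u x) (xhat i)
  have hC : Convex ℝ {z : TS n m | ∀ j, z j ∈ X j} := PiLp.convex_setOf_forall_mem hXcv
  have hxhatC : ∀ j, xhat j ∈ X j := fun j => (hxhat j).1
  have hxhatVI := PiLp.sum_le_inner_add_of_forall_isMinOn hXcv
    (fun i => (hg i).subset (Set.subset_univ _) (hXcv i))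
    (fun i => (hC1 i x hx).differentiable one_ne_zero _) hxhatC (fun i => (hxhat i).2) hystarX
  have hystarVI := hystar.le_inner_add_of_inner_add_half_norm_sq hC
    ((PiLp.convexOn_sum_apply hg).subset (Set.subset_univ _) hC) hystarX hxhatC
  have hprox : ‖ystar - xhat‖ ≤ ‖(x - gradient f x) - (xhat - γ)‖ :=
    norm_sub_le_of_inner_le_add (by rwa [sub_sub_cancel]) hystarVI
  have hlip : ‖γ - gradient f x‖ ≤ L * ‖xhat - x‖ := PiLp.norm_le_mul_norm_of_forall fun i => by
    simpa [γ, ← hgc i x hx] using hftLip i x hx (xhat i) (x i)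
  have hdist : ‖x - ystar‖ ≤ (2 + L) * ‖xhat - x‖ := calc
    ‖x - ystar‖ ≤ ‖x - xhat‖ + ‖xhat - ystar‖ := norm_sub_le_norm_sub_add_norm_sub _ _ _
    _ ≤ ‖x - xhat‖ + (‖x - xhat‖ + ‖γ - gradient f x‖) := by
      rw [norm_sub_rev xhat]
      gcongr
      refine hprox.trans ?_
      rw [show x - gradient f x - (xhat - γ) = (x - xhat) + (γ - gradient f x) by abel]
      exact norm_add_le _ _
    _ ≤ (2 + L) * ‖xhat - x‖ := by rw [norm_sub_rev x xhat]; linarith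
  calc ‖x - ystar‖ ^ 2 ≤ ((2 + L) * ‖xhat - x‖) ^ 2 := pow_le_pow_left₀ (norm_nonneg _) hdist 2
    _ ≤ 2 * (L ^ 2 + 2 * L + 2) * ‖xhat - x‖ ^ 2 := by
      nlinarith [mul_nonneg (sq_nonneg L) (sq_nonneg ‖xhat - x‖)]

/-- The proximal gradient `∇̃h(x) = x − argmin_{y ∈ X} {⟨∇f(x), y − x⟩ +
Σ_i g_i(y_i) + ½‖y − x‖²}` satisfies `‖∇̃h(x)‖² ≤ 2(L² + 2L + 2) ‖x̂(x) − x‖²`. -/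
theorem stmt14
    {n : ℕ} {m : Fin n → ℕ}
    (X : ∀ j, Set (EuclideanSpace ℝ (Fin (m j))))
    (hXne : ∀ j, (X j).Nonempty) (hXcl : ∀ j, IsClosed (X j)) (hXcv : ∀ j, Convex ℝ (X j))
    (f : TS n m → ℝ) (hf : ContDiff ℝ 1 f)
    (g : ∀ j, EuclideanSpace ℝ (Fin (m j)) → ℝ) (hg : ∀ j, ConvexOn ℝ Set.univ (g j))
    (ft : ∀ j, EuclideanSpace ℝ (Fin (m j)) → TS n m → ℝ)
    (τ : ℝ) (hτ : 0 < τ)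
    -- `f̃_i(·, y)` is continuously differentiable and `τ`-strongly convex on `X_i`
    (hC1 : ∀ i, ∀ y : TS n m, (∀ j, y j ∈ X j) → ContDiff ℝ 1 fun u => ft i u y)
    (hsc : ∀ i, ∀ y : TS n m, (∀ j, y j ∈ X j) → ∀ u ∈ X i, ∀ u' ∈ X i,
      ft i u y ≥ ft i u' y + ⟪gradient (fun v => ft i v y) u', u - u'⟫ + τ / 2 * ‖u - u'‖ ^ 2)
    -- gradient consistency: `∇_{x_i} f̃_i(x_i, x) = ∇_{x_i} f(x)` for all `x ∈ X`
    (hgc : ∀ i, ∀ y : TS n m, (∀ j, y j ∈ X j) →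
      gradient (fun u => ft i u y) (y i) = gradient f y i)
    -- `∇_{x_i} f̃_i(·, x)` is Lipschitz with constant `L = max_i L_i`
    (L : ℝ) (hftLip : ∀ i, ∀ y : TS n m, (∀ j, y j ∈ X j) →
      ∀ u v : EuclideanSpace ℝ (Fin (m i)),
      ‖gradient (fun w => ft i w y) u - gradient (fun w => ft i w y) v‖ ≤ L * ‖u - v‖)
    -- the fixed point `x ∈ X`
    (x : TS n m) (hx : ∀ j, x j ∈ X j)
    -- the best responses `x̂_i(x)`
    (xhat : TS n m)
    (hxhat : ∀ i, xhat i ∈ X i ∧ IsMinOn (fun u => ft i u x + g i u) (X i) (xhat i))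
    -- the proximal point defining `∇̃h(x) = x − y^*`
    (ystar : TS n m) (hystarX : ∀ j, ystar j ∈ X j)
    (hystar : IsMinOn
      (fun y => ⟪gradient f x, y - x⟫ + (∑ i, g i (y i)) + 1 / 2 * ‖y - x‖ ^ 2)
      {z : TS n m | ∀ j, z j ∈ X j} ystar) :
    ‖x - ystar‖ ^ 2 ≤ 2 * (L ^ 2 + 2 * L + 2) * ‖xhat - x‖ ^ 2 :=
  stmt14_general X hXcv f g hg ft hC1 hgc L hftLip x hx xhat hxhat ystar hystarX hystar
end
end
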